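/- arXiv:math/0306058 — 5 statements merged into one kernel-verified Lean document; each statement's English description precedes it below -/
import Mathlib

section
/- Let n = 2d and consider the Schrödinger representation of H_n on V = C^{2d}. Set W_{l}^{±} = span{ x_i x_j ± x_{i+d} x_{j+d} : i + j ≡ l (mod 2), i,j ∈ Z/2d } for l ∈ {0,1}. Then Sym^2(V) = W_0^+ ⊕ W_0^- ⊕ W_1^+ ⊕ W_1^-, and each W_l^± is invariant under σ and τ. -/
open Module MvPolynomial

/-- σ-action (`x_j ↦ x_{j-1}`) on polynomials in variables indexed by `ZMod n`. -/
noncomputable def sigmaPoly (n : ℕ) :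
    MvPolynomial (ZMod n) ℂ →ₐ[ℂ] MvPolynomial (ZMod n) ℂ :=
  MvPolynomial.rename (fun j => j - 1)

/-- τ-action (`x_j ↦ ε^j x_j`, `ε = e^{2πi/n}`) on polynomials. -/
noncomputable def tauPoly (n : ℕ) :
    MvPolynomial (ZMod n) ℂ →ₐ[ℂ] MvPolynomial (ZMod n) ℂ :=
  MvPolynomial.aeval
    (fun j : ZMod n => (Complex.exp (2 * Real.pi * Complex.I / n) ^ j.val) • MvPolynomial.X j)

/-- `Sym² V` as the span of the quadratic monomials `x_i x_j`. -/
noncomputable def symSquare (n : ℕ) : Submodule ℂ (MvPolynomial (ZMod n) ℂ) :=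
  Submodule.span ℂ { p | ∃ i j : ZMod n, p = X i * X j }

/-- `W_l^±  = span{ x_i x_j ± x_{i+d} x_{j+d} : i + j ≡ l (mod 2) }`, the sign being
recorded by `e ∈ {1, -1}`. -/
noncomputable def Wlpm (d l : ℕ) (e : ℂ) : Submodule ℂ (MvPolynomial (ZMod (2 * d)) ℂ) :=
  Submodule.span ℂ
    { p | ∃ i j : ZMod (2 * d), (i + j).val % 2 = l ∧
        p = X i * X j + e • (X (i + (d : ZMod (2 * d))) * X (j + (d : ZMod (2 * d)))) }

namespace SymSqAux


variable (d : ℕ)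

/-- shift on exponent vectors: `m ↦ m ∘ (· - d)`, i.e. exponent of `x_{i+d}` becomes exponent of `x_i`. -/
noncomputable def shiftE (m : ZMod (2 * d) →₀ ℕ) : ZMod (2 * d) →₀ ℕ :=
  Finsupp.equivMapDomain (Equiv.addRight (d : ZMod (2 * d))) m

def degE (m : ZMod (2 * d) →₀ ℕ) : ℕ := m.sum fun _ k => k

def parE (m : ZMod (2 * d) →₀ ℕ) : ℕ := (m.sum fun i k => k * i.val) % 2

variable {d}

lemma dd_zero : (d : ZMod (2 * d)) + (d : ZMod (2 * d)) = 0 := by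
  have : ((2 * d : ℕ) : ZMod (2 * d)) = 0 := ZMod.natCast_self _
  push_cast at this
  linear_combination this

lemma shiftE_shiftE (m : ZMod (2 * d) →₀ ℕ) : shiftE d (shiftE d m) = m := by
  ext a
  simp only [shiftE, Finsupp.equivMapDomain_apply, Equiv.coe_addRight, Equiv.addRight_symm_apply]
  congr 1
  have := dd_zero (d := d)
  linear_combination -this

lemma shiftE_single (i : ZMod (2 * d)) (k : ℕ) :
    shiftE d (Finsupp.single i k) = Finsupp.single (i + d) k := by
  simp [shiftE, Finsupp.equivMapDomain_single]

lemma shiftE_add (m₁ m₂ : ZMod (2 * d) →₀ ℕ) :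
    shiftE d (m₁ + m₂) = shiftE d m₁ + shiftE d m₂ := by
  ext a; simp [shiftE, Finsupp.equivMapDomain_apply]

lemma degE_shiftE (m : ZMod (2 * d) →₀ ℕ) : degE d (shiftE d m) = degE d m := by
  simp [degE, shiftE, Finsupp.sum_equivMapDomain]

lemma val_add_mod2 (hd : 0 < d) (a b : ZMod (2 * d)) :
    (a + b).val % 2 = (a.val + b.val) % 2 := by
  haveI : NeZero (2 * d) := ⟨by omega⟩
  rw [ZMod.val_add, Nat.mod_mod_of_dvd _ ⟨d, rfl⟩]

lemma val_add_d_mod2 (hd : 0 < d) (a : ZMod (2 * d)) :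
    (a + (d : ZMod (2 * d))).val % 2 = (a.val + d) % 2 := by
  haveI : NeZero (2 * d) := ⟨by omega⟩
  rw [val_add_mod2 hd, Nat.add_mod, ZMod.val_natCast, Nat.mod_mod_of_dvd _ ⟨d, rfl⟩,
    ← Nat.add_mod]

lemma parE_shiftE (hd : 0 < d) (m : ZMod (2 * d) →₀ ℕ) (hm : degE d m = 2) :
    parE d (shiftE d m) = parE d m := by
  have key : ∀ a ∈ m.support, (m a * (a + (d : ZMod (2 * d))).val) % 2
      = (m a * (a.val + d)) % 2 := by
    intro a _
    rw [Nat.mul_mod, val_add_d_mod2 hd, ← Nat.mul_mod]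
  have hm' : (∑ a ∈ m.support, m a) = 2 := hm
  calc parE d (shiftE d m)
      = (∑ a ∈ m.support, m a * (a + (d : ZMod (2 * d))).val) % 2 := by
        simp only [parE, shiftE, Finsupp.sum_equivMapDomain, Equiv.coe_addRight]
        rfl
    _ = (∑ a ∈ m.support, m a * (a.val + d)) % 2 := by
        rw [Finset.sum_nat_mod, Finset.sum_congr rfl key, ← Finset.sum_nat_mod]
    _ = (∑ a ∈ m.support, m a * a.val + (∑ a ∈ m.support, m a) * d) % 2 := by
        congr 1
        rw [Finset.sum_mul, ← Finset.sum_add_distrib]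
        exact Finset.sum_congr rfl fun a _ => by ring
    _ = (∑ a ∈ m.support, m a * a.val) % 2 := by rw [hm']; omega
    _ = parE d m := rfl


/-- exponent vector of `x_i x_j`. -/
noncomputable def uE (i j : ZMod (2 * d)) : ZMod (2 * d) →₀ ℕ :=
  Finsupp.single i 1 + Finsupp.single j 1

lemma X_mul_X (i j : ZMod (2 * d)) :
    (X i * X j : MvPolynomial (ZMod (2 * d)) ℂ) = monomial (uE i j) 1 := by
  rw [MvPolynomial.X, MvPolynomial.X, MvPolynomial.monomial_mul, one_mul, uE]

lemma degE_uE (i j : ZMod (2 * d)) : degE d (uE i j) = 2 := by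
  rw [degE, uE, Finsupp.sum_add_index' (fun _ => rfl) (fun _ _ _ => rfl),
    Finsupp.sum_single_index rfl, Finsupp.sum_single_index rfl]

lemma parE_uE (hd : 0 < d) (i j : ZMod (2 * d)) : parE d (uE i j) = (i + j).val % 2 := by
  rw [parE, uE, Finsupp.sum_add_index' (fun a => by simp) (fun a b c => by ring),
    Finsupp.sum_single_index (by simp), Finsupp.sum_single_index (by simp),
    one_mul, one_mul, val_add_mod2 hd]

lemma shiftE_uE (i j : ZMod (2 * d)) :
    shiftE d (uE i j) = uE (i + (d : ZMod (2 * d))) (j + (d : ZMod (2 * d))) := by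
  rw [uE, shiftE_add, shiftE_single, shiftE_single, uE]

lemma uE_shift_add (i j : ZMod (2 * d)) :
    (i + (d : ZMod (2 * d))) + (j + (d : ZMod (2 * d))) = i + j := by
  have := dd_zero (d := d)
  linear_combination this

variable (d) in
/-- The "coefficient-condition" submodule containing `Wlpm d l e`. -/
noncomputable def K (l : ℕ) (e : ℂ) : Submodule ℂ (MvPolynomial (ZMod (2 * d)) ℂ) where
  carrier := {p | ∀ m, (¬(degE d m = 2 ∧ parE d m = l) → coeff m p = 0) ∧
      coeff (shiftE d m) p = e * coeff m p}
  add_mem' := by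
    intro a b ha hb
    intro m
    refine ⟨fun h => ?_, ?_⟩
    · rw [coeff_add, (ha m).1 h, (hb m).1 h, add_zero]
    · rw [coeff_add, coeff_add, (ha m).2, (hb m).2]; ring
  zero_mem' := by intro m; simp
  smul_mem' := by
    intro c p hp m
    refine ⟨fun h => ?_, ?_⟩
    · rw [coeff_smul, (hp m).1 h, smul_zero]
    · rw [coeff_smul, coeff_smul, (hp m).2, smul_eq_mul, smul_eq_mul]; ring

/-- the generator of `Wlpm`. -/
noncomputable def gen (i j : ZMod (2 * d)) (e : ℂ) : MvPolynomial (ZMod (2 * d)) ℂ :=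
  X i * X j + e • (X (i + (d : ZMod (2 * d))) * X (j + (d : ZMod (2 * d))))

lemma coeff_gen (i j : ZMod (2 * d)) (e : ℂ) (m : ZMod (2 * d) →₀ ℕ) :
    coeff m (gen i j e) = (if uE i j = m then (1:ℂ) else 0)
      + e * (if uE (i + (d : ZMod (2 * d))) (j + (d : ZMod (2 * d))) = m then (1:ℂ) else 0) := by
  rw [gen, X_mul_X, X_mul_X, coeff_add, coeff_smul, coeff_monomial, coeff_monomial, smul_eq_mul]

lemma ite_shift_eq (u v m : ZMod (2 * d) →₀ ℕ) (huv : shiftE d u = v) :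
    (if u = shiftE d m then (1:ℂ) else 0) = (if v = m then (1:ℂ) else 0) := by
  have hiff : (u = shiftE d m) ↔ (v = m) := by
    constructor
    · intro h; rw [← huv, h, shiftE_shiftE]
    · intro h
      calc u = shiftE d (shiftE d u) := (shiftE_shiftE u).symm
        _ = shiftE d v := by rw [huv]
        _ = shiftE d m := by rw [h]
  simp only [hiff]

lemma gen_mem_K (hd : 0 < d) {l : ℕ} {e : ℂ} (he : e * e = 1) {i j : ZMod (2 * d)}
    (hl : (i + j).val % 2 = l) : gen i j e ∈ K d l e := by
  have hs1 : shiftE d (uE i j) = uE (i + (d : ZMod (2 * d))) (j + (d : ZMod (2 * d))) :=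
    shiftE_uE i j
  have hs2 : shiftE d (uE (i + (d : ZMod (2 * d))) (j + (d : ZMod (2 * d)))) = uE i j := by
    rw [← hs1, shiftE_shiftE]
  intro m
  constructor
  · intro h
    rw [coeff_gen]
    rw [if_neg, if_neg, mul_zero, add_zero]
    · rintro rfl
      exact h ⟨degE_uE _ _, by rw [parE_uE hd, uE_shift_add, hl]⟩
    · rintro rfl
      exact h ⟨degE_uE _ _, by rw [parE_uE hd, hl]⟩
  · rw [coeff_gen, coeff_gen, ite_shift_eq _ _ m hs1, ite_shift_eq _ _ m hs2]
    linear_combination (-(if uE (i + (d : ZMod (2 * d))) (j + (d : ZMod (2 * d))) = m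
      then (1:ℂ) else 0)) * he


lemma Wlpm_le_K (hd : 0 < d) {l : ℕ} {e : ℂ} (he : e * e = 1) : Wlpm d l e ≤ K d l e := by
  rw [Wlpm, Submodule.span_le]
  rintro p ⟨i, j, hl, rfl⟩
  exact gen_mem_K hd he hl

variable (d) in
/-- auxiliary submodule: on quadratic parity-`l` monomials, shifting multiplies by `-e`. -/
noncomputable def M (l : ℕ) (e : ℂ) : Submodule ℂ (MvPolynomial (ZMod (2 * d)) ℂ) where
  carrier := {p | ∀ m, degE d m = 2 → parE d m = l → coeff (shiftE d m) p = -(e * coeff m p)}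
  add_mem' := by
    intro a b ha hb m h1 h2
    rw [coeff_add, coeff_add, ha m h1 h2, hb m h1 h2]; ring
  zero_mem' := by intro m _ _; simp
  smul_mem' := by
    intro c p hp m h1 h2
    rw [coeff_smul, coeff_smul, hp m h1 h2, smul_eq_mul, smul_eq_mul]; ring

lemma K_le_M_same (l : ℕ) (e : ℂ) : K d l (-e) ≤ M d l e := by
  intro p hp m _ _
  rw [(hp m).2]; ring

lemma K_le_M_diff (hd : 0 < d) {l l' : ℕ} (hll : l' ≠ l) (e' e : ℂ) :
    K d l' e' ≤ M d l e := by
  intro p hp m h1 h2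
  have hm : coeff m p = 0 := (hp m).1 (by rintro ⟨_, h⟩; exact hll (h ▸ h2 ▸ rfl))
  have hsm : coeff (shiftE d m) p = 0 := by
    refine (hp (shiftE d m)).1 ?_
    rintro ⟨_, h⟩
    rw [parE_shiftE hd m h1] at h
    exact hll (h ▸ h2 ▸ rfl)
  rw [hm, hsm, mul_zero, neg_zero]

lemma K_indep (hd : 0 < d) :
    iSupIndep (fun le : Fin 2 × Bool => K d (le.1 : ℕ) (if le.2 then (1:ℂ) else -1)) := by
  rw [iSupIndep_def]
  rintro ⟨k1, k2⟩
  rw [Submodule.disjoint_def]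
  intro p hp hp'
  set e : ℂ := if k2 then (1:ℂ) else -1 with he_def
  have he : e * e = 1 := by rcases k2 <;> simp [he_def]
  have he0 : e ≠ 0 := by rcases k2 <;> simp [he_def]
  have hsup : (⨆ j, ⨆ _ : j ≠ ((k1, k2) : Fin 2 × Bool),
      K d (j.1 : ℕ) (if j.2 then (1:ℂ) else -1)) ≤ M d (k1 : ℕ) e := by
    refine iSup_le ?_
    rintro ⟨j1, j2⟩
    refine iSup_le fun hj => ?_
    by_cases h1 : j1 = k1
    · have h2 : j2 ≠ k2 := fun h2 => hj (by rw [h1, h2])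
      have heq : (if j2 then (1:ℂ) else -1) = -e := by
        rcases k2 <;> rcases j2 <;> simp_all [he_def]
      simp only [heq, h1]
      exact K_le_M_same _ _
    · have : (j1 : ℕ) ≠ (k1 : ℕ) := fun h => h1 (Fin.ext h)
      exact K_le_M_diff hd this _ _
  have hM : p ∈ M d (k1 : ℕ) e := hsup hp'
  refine MvPolynomial.ext _ _ fun m => ?_
  rw [coeff_zero]
  by_cases hm : degE d m = 2 ∧ parE d m = (k1 : ℕ)
  · have h1 := (hp m).2
    have h2 := hM m hm.1 hm.2
    rw [h1] at h2
    have h3 : (2 * e) * coeff m p = 0 := by linear_combination h2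
    rcases mul_eq_zero.mp h3 with h | h
    · exact absurd h (by simpa using he0)
    · exact h
  · exact (hp m).1 hm


lemma gen_mem_W {l : ℕ} {e : ℂ} {i j : ZMod (2 * d)} (hl : (i + j).val % 2 = l) :
    gen i j e ∈ Wlpm d l e :=
  Submodule.subset_span ⟨i, j, hl, rfl⟩

lemma Wlpm_le_symSquare (l : ℕ) (e : ℂ) : Wlpm d l e ≤ symSquare (2 * d) := by
  rw [Wlpm, Submodule.span_le]
  rintro p ⟨i, j, _, rfl⟩
  exact Submodule.add_mem _ (Submodule.subset_span ⟨i, j, rfl⟩)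
    (Submodule.smul_mem _ _ (Submodule.subset_span ⟨_, _, rfl⟩))

lemma sup_eq_symSquare (hd : 0 < d) :
    Wlpm d 0 1 ⊔ Wlpm d 0 (-1) ⊔ Wlpm d 1 1 ⊔ Wlpm d 1 (-1) = symSquare (2 * d) := by
  apply le_antisymm
  · exact sup_le (sup_le (sup_le (Wlpm_le_symSquare 0 1) (Wlpm_le_symSquare 0 (-1)))
      (Wlpm_le_symSquare 1 1)) (Wlpm_le_symSquare 1 (-1))
  · rw [symSquare, Submodule.span_le]
    rintro p ⟨i, j, rfl⟩
    set S := Wlpm d 0 1 ⊔ Wlpm d 0 (-1) ⊔ Wlpm d 1 1 ⊔ Wlpm d 1 (-1) with hS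
    have h01 : Wlpm d 0 1 ≤ S := le_sup_left.trans' (le_sup_left.trans' le_sup_left)
    have h0m : Wlpm d 0 (-1) ≤ S := le_sup_left.trans' (le_sup_left.trans' le_sup_right)
    have h11 : Wlpm d 1 1 ≤ S := le_sup_left.trans' le_sup_right
    have h1m : Wlpm d 1 (-1) ≤ S := le_sup_right
    have hg1 : gen i j 1 ∈ S := by
      rcases Nat.mod_two_eq_zero_or_one ((i + j).val) with h | h
      · exact h01 (gen_mem_W h)
      · exact h11 (gen_mem_W h)
    have hgm : gen i j (-1) ∈ S := by
      rcases Nat.mod_two_eq_zero_or_one ((i + j).val) with h | h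
      · exact h0m (gen_mem_W h)
      · exact h1m (gen_mem_W h)
    have key : (X i * X j : MvPolynomial (ZMod (2 * d)) ℂ)
        = (2⁻¹ : ℂ) • (gen i j 1 + gen i j (-1)) := by
      rw [gen, gen]
      module
    rw [key]
    exact Submodule.smul_mem _ _ (Submodule.add_mem _ hg1 hgm)

lemma val_sub_two_mod2 (hd : 0 < d) (a : ZMod (2 * d)) :
    (a - 2).val % 2 = a.val % 2 := by
  haveI : NeZero (2 * d) := ⟨by omega⟩
  have h2 : ((2 * d - 2 : ℕ) : ZMod (2 * d)) = -2 := by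
    have h : (2 : ℕ) ≤ 2 * d := by omega
    rw [Nat.cast_sub h, ZMod.natCast_self, zero_sub, Nat.cast_ofNat]
  have ha : a - 2 = a + ((2 * d - 2 : ℕ) : ZMod (2 * d)) := by rw [h2]; ring
  rw [ha, val_add_mod2 hd, ZMod.val_natCast,
    Nat.mod_eq_of_lt (show 2 * d - 2 < 2 * d by omega)]
  omega

lemma sigma_invariant (hd : 0 < d) (l : ℕ) (e : ℂ) :
    ∀ p ∈ Wlpm d l e, sigmaPoly (2 * d) p ∈ Wlpm d l e := by
  have hle : Wlpm d l e ≤ (Wlpm d l e).comap (sigmaPoly (2 * d)).toLinearMap := by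
    rw [Wlpm, Submodule.span_le]
    rintro p ⟨i, j, hl, rfl⟩
    rw [SetLike.mem_coe, Submodule.mem_comap]
    have hpar : ((i - 1) + (j - 1)).val % 2 = l := by
      have h : (i - 1) + (j - 1) = (i + j) - 2 := by ring
      rw [h, val_sub_two_mod2 hd, hl]
    have himg : (sigmaPoly (2 * d)).toLinearMap
          (X i * X j + e • (X (i + (d : ZMod (2 * d))) * X (j + (d : ZMod (2 * d)))))
        = X (i - 1) * X (j - 1)
          + e • (X ((i - 1) + (d : ZMod (2 * d))) * X ((j - 1) + (d : ZMod (2 * d)))) := by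
      show (sigmaPoly (2 * d))
          (X i * X j + e • (X (i + (d : ZMod (2 * d))) * X (j + (d : ZMod (2 * d))))) = _
      rw [sigmaPoly]
      simp only [map_add, map_smul, map_mul, rename_X]
      have e1 : i + (d : ZMod (2 * d)) - 1 = (i - 1) + (d : ZMod (2 * d)) := by ring
      have e2 : j + (d : ZMod (2 * d)) - 1 = (j - 1) + (d : ZMod (2 * d)) := by ring
      rw [e1, e2]
    rw [himg]
    exact Submodule.subset_span ⟨i - 1, j - 1, hpar, rfl⟩
  exact fun p hp => hle hp

lemma tau_invariant (hd : 0 < d) (l : ℕ) (e : ℂ) :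
    ∀ p ∈ Wlpm d l e, tauPoly (2 * d) p ∈ Wlpm d l e := by
  set ε : ℂ := Complex.exp (2 * Real.pi * Complex.I / ((2 * d : ℕ) : ℂ)) with hε_def
  have hne : ((2 * d : ℕ) : ℂ) ≠ 0 := Nat.cast_ne_zero.mpr (by omega)
  have hε : ε ^ (2 * d) = 1 := by
    rw [hε_def, ← Complex.exp_nat_mul, mul_div_cancel₀ _ hne, Complex.exp_two_pi_mul_I]
  have hεmod : ∀ A : ℕ, ε ^ A = ε ^ (A % (2 * d)) := by
    intro A
    conv_lhs => rw [← Nat.div_add_mod A (2 * d)]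
    rw [pow_add, pow_mul, hε, one_pow, one_mul]
  haveI : NeZero (2 * d) := ⟨by omega⟩
  have hle : Wlpm d l e ≤ (Wlpm d l e).comap (tauPoly (2 * d)).toLinearMap := by
    rw [Wlpm, Submodule.span_le]
    rintro p ⟨i, j, hl, rfl⟩
    rw [SetLike.mem_coe, Submodule.mem_comap]
    have hmul : ∀ a b : ZMod (2 * d),
        (ε ^ a.val • (X a : MvPolynomial (ZMod (2 * d)) ℂ)) * (ε ^ b.val • X b)
        = (ε ^ (a.val + b.val)) • (X a * X b) := by
      intro a b
      rw [smul_mul_smul_comm, pow_add]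
    have hexp : ε ^ ((i + (d : ZMod (2 * d))).val + (j + (d : ZMod (2 * d))).val)
        = ε ^ (i.val + j.val) := by
      rw [hεmod, hεmod (i.val + j.val), ← ZMod.val_add, ← ZMod.val_add, uE_shift_add]
    have himg : (tauPoly (2 * d)).toLinearMap
          (X i * X j + e • (X (i + (d : ZMod (2 * d))) * X (j + (d : ZMod (2 * d)))))
        = (ε ^ (i.val + j.val)) •
          (X i * X j + e • (X (i + (d : ZMod (2 * d))) * X (j + (d : ZMod (2 * d))))) := by
      show (tauPoly (2 * d))
          (X i * X j + e • (X (i + (d : ZMod (2 * d))) * X (j + (d : ZMod (2 * d))))) = _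
      rw [tauPoly]
      simp only [map_add, map_smul, map_mul, aeval_X]
      rw [hmul, hmul, hexp, smul_add, smul_comm (ε ^ (i.val + j.val)) e]
    rw [himg]
    exact Submodule.smul_mem _ _ (gen_mem_W hl)
  exact fun p hp => hle hp

end SymSqAux

/-- for `n = 2d`, `Sym² V = W_0^+ ⊕ W_0^- ⊕ W_1^+ ⊕ W_1^-`, and each of the
four subspaces is invariant under σ and τ. -/
theorem symSquare_decomposition_even (d : ℕ) (hd : 0 < d) :
    (Wlpm d 0 1 ⊔ Wlpm d 0 (-1) ⊔ Wlpm d 1 1 ⊔ Wlpm d 1 (-1) = symSquare (2 * d)) ∧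
    iSupIndep (fun le : Fin 2 × Bool =>
      Wlpm d (le.1 : ℕ) (if le.2 then 1 else -1)) ∧
    (∀ (l : ℕ) (e : ℂ), l < 2 → (e = 1 ∨ e = -1) →
      (∀ p ∈ Wlpm d l e, sigmaPoly (2 * d) p ∈ Wlpm d l e) ∧
      (∀ p ∈ Wlpm d l e, tauPoly (2 * d) p ∈ Wlpm d l e)) := by
  refine ⟨SymSqAux.sup_eq_symSquare hd, ?_,
    fun l e _ _ => ⟨SymSqAux.sigma_invariant hd l e, SymSqAux.tau_invariant hd l e⟩⟩
  exact (SymSqAux.K_indep hd).mono fun le =>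
    SymSqAux.Wlpm_le_K hd (by rcases le.2 <;> norm_num)
end

section
/- In the setting n = 2d, the subspaces W_{l,m}^{±} = span{ x_i x_j ± x_{i+d} x_{j+d} : i + j ≡ l (mod 2), i - j ≡ m (mod 2d) } for l ∈ {0,1}, 0 ≤ m ≤ d, m ≡ l (mod 2), are each d-dimensional (when nonzero in the stated range) and invariant under σ and τ, and W_l^± = ⊕_m W_{l,m}^±. -/
open Module MvPolynomial

/-- `W_{l,m}^± = span{ x_i x_j ± x_{i+d} x_{j+d} : i + j ≡ l (mod 2), i - j ≡ m (mod 2d) }`. -/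
noncomputable def Wlmpm (d l m : ℕ) (e : ℂ) : Submodule ℂ (MvPolynomial (ZMod (2 * d)) ℂ) :=
  Submodule.span ℂ
    { p | ∃ i j : ZMod (2 * d), (i + j).val % 2 = l ∧ i - j = (m : ZMod (2 * d)) ∧
        p = X i * X j + e • (X (i + (d : ZMod (2 * d))) * X (j + (d : ZMod (2 * d)))) }

/- Auxiliary lemmas -/

namespace WlmAux

variable {d : ℕ}


/-- multiset-type lemma for degree-2 exponent vectors -/
lemma pair_eq {α : Type*} {i j i' j' : α}
    (h : Finsupp.single i 1 + Finsupp.single j 1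
       = Finsupp.single i' 1 + Finsupp.single j' (1 : ℕ)) :
    (i = i' ∧ j = j') ∨ (i = j' ∧ j = i') := by
  rw [Finsupp.single_add_single_eq_single_add_single one_ne_zero one_ne_zero] at h
  rcases h with ⟨h1, h2⟩ | ⟨_, h1, h2⟩ | ⟨h, _⟩
  · exact Or.inl ⟨h1, h2⟩
  · exact Or.inr ⟨h1, h2⟩
  · simp at h

lemma XX {σ : Type*} (i j : σ) :
    (X i * X j : MvPolynomial σ ℂ)
      = monomial (Finsupp.single i 1 + Finsupp.single j 1) 1 := by
  rw [← pow_one (X i), X_pow_eq_monomial, ← pow_one (X j), X_pow_eq_monomial,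
    monomial_mul, one_mul]

lemma coeff_XXe {σ : Type*} [DecidableEq σ] (e : ℂ) (i j i' j' : σ) (f : σ →₀ ℕ) :
    MvPolynomial.coeff f (X i * X j + e • (X i' * X j'))
      = (if Finsupp.single i 1 + Finsupp.single j 1 = f then 1 else 0)
        + e * (if Finsupp.single i' 1 + Finsupp.single j' 1 = f then 1 else 0) := by
  rw [coeff_add, coeff_smul, XX, XX, coeff_monomial, coeff_monomial, smul_eq_mul]



lemma core_parity (hd : 0 < d) (i j : ZMod (2 * d)) :
    (i + j).val % 2 = (i - j).val % 2 := by
  haveI : NeZero (2 * d) := ⟨by omega⟩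
  have hdvd : (2 : ℕ) ∣ 2 * d := ⟨d, rfl⟩
  have hc : ∀ a : ZMod (2 * d), ((a.val : ℕ) : ZMod 2)
      = ZMod.castHom hdvd (ZMod 2) a := fun a => by
    rw [ZMod.natCast_val, ZMod.castHom_apply]
  have key : (((i + j).val : ℕ) : ZMod 2) = (((i - j).val : ℕ) : ZMod 2) := by
    rw [hc, hc, map_add, map_sub]
    have hneg : ∀ x : ZMod 2, -x = x := by decide
    rw [sub_eq_add_neg, hneg]
  have := (ZMod.natCast_eq_natCast_iff _ _ _).mp key
  simpa [Nat.ModEq] using this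

lemma parity_eq (hd : 0 < d) {i j : ZMod (2 * d)} {m l : ℕ} (hl : l < 2) (hm : m ≤ d)
    (hml : m % 2 = l) (hij : i - j = (m : ZMod (2 * d))) : (i + j).val % 2 = l := by
  haveI : NeZero (2 * d) := ⟨by omega⟩
  have h1 : (i - j).val = m := by rw [hij, ZMod.val_cast_of_lt (by omega)]
  rw [core_parity hd, h1, hml]

lemma cast_val_eq (hd : 0 < d) (i : ZMod (2 * d)) :
    ((i.val : ℕ) : ZMod (2 * d)) = i := by
  haveI : NeZero (2 * d) := ⟨by omega⟩
  exact ZMod.natCast_rightInverse i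

lemma dd_zero (hd : 0 < d) : ((d : ZMod (2 * d)) + (d : ZMod (2 * d))) = 0 := by
  rw [← Nat.cast_add]
  have : d + d = 2 * d := by omega
  rw [this, ZMod.natCast_self]

lemma neg_dd (hd : 0 < d) : -(d : ZMod (2 * d)) = (d : ZMod (2 * d)) := by
  have := dd_zero hd; linear_combination -this

lemma two_m_zero (hd : 0 < d) {m : ℕ} (hm : m ≤ d)
    (h : (m : ZMod (2 * d)) + (m : ZMod (2 * d)) = 0) : m = 0 ∨ m = d := by
  rw [← Nat.cast_add, ZMod.natCast_eq_zero_iff] at h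
  rcases Nat.eq_zero_or_pos (m + m) with h0 | hpos
  · left; omega
  · right; have := Nat.le_of_dvd hpos h; omega




lemma fin_cast_inj (hd : 0 < d) {a b : Fin d}
    (h : ((a : ℕ) : ZMod (2 * d)) = ((b : ℕ) : ZMod (2 * d))) : a = b := by
  haveI : NeZero (2 * d) := ⟨by omega⟩
  apply Fin.ext
  have := congrArg ZMod.val h
  rwa [ZMod.val_cast_of_lt (by omega), ZMod.val_cast_of_lt (by omega)] at this

lemma addd_ne (hd : 0 < d) (j k : Fin d) :
    ((j : ℕ) : ZMod (2 * d)) + (d : ZMod (2 * d)) ≠ ((k : ℕ) : ZMod (2 * d)) := by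
  haveI : NeZero (2 * d) := ⟨by omega⟩
  intro h
  have := congrArg ZMod.val h
  rw [ZMod.val_add, ZMod.val_cast_of_lt (show (j:ℕ) < 2*d by omega),
    ZMod.val_cast_of_lt (show d < 2*d by omega),
    ZMod.val_cast_of_lt (show (k:ℕ) < 2*d by omega),
    Nat.mod_eq_of_lt (by omega)] at this
  omega

lemma natCast_m_inj (hd : 0 < d) {m m' : ℕ} (hm : m ≤ d) (hm' : m' ≤ d)
    (h : (m : ZMod (2 * d)) = (m' : ZMod (2 * d))) : m = m' := by
  haveI : NeZero (2 * d) := ⟨by omega⟩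
  have := congrArg ZMod.val h
  rwa [ZMod.val_cast_of_lt (by omega), ZMod.val_cast_of_lt (by omega)] at this

lemma claimA (hd : 0 < d) {m : ℕ} (hm : m ≤ d) {j k : Fin d} (hjk : j ≠ k)
    (h : Finsupp.single ((j : ℕ) : ZMod (2 * d)) 1
        + Finsupp.single (((j : ℕ) : ZMod (2 * d)) - m) 1
       = Finsupp.single ((k : ℕ) : ZMod (2 * d)) 1
        + Finsupp.single (((k : ℕ) : ZMod (2 * d)) - m) (1:ℕ)) : False := by
  rcases pair_eq h with ⟨h1, h2⟩ | ⟨h1, h2⟩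
  · exact hjk (fin_cast_inj hd h1)
  · have h3 : (m : ZMod (2 * d)) + (m : ZMod (2 * d)) = 0 := by linear_combination h1 - h2
    rcases two_m_zero hd hm h3 with rfl | hmd
    · exact hjk (fin_cast_inj hd (by simpa using h1))
    · rw [hmd] at h1
      have h1' : ((k : ℕ) : ZMod (2 * d)) + (d : ZMod (2 * d)) = ((j : ℕ) : ZMod (2 * d)) := by
        rw [sub_eq_add_neg, neg_dd hd] at h1
        exact h1.symm
      exact addd_ne hd k j h1'

lemma claimB (hd : 0 < d) {m : ℕ} (hm : m ≤ d) {j k : Fin d}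
    (h : Finsupp.single (((j : ℕ) : ZMod (2 * d)) + d) 1
        + Finsupp.single (((j : ℕ) : ZMod (2 * d)) - m + d) 1
       = Finsupp.single ((k : ℕ) : ZMod (2 * d)) 1
        + Finsupp.single (((k : ℕ) : ZMod (2 * d)) - m) (1:ℕ)) : j = k ∧ m = d := by
  rcases pair_eq h with ⟨h1, h2⟩ | ⟨h1, h2⟩
  · exact absurd h1 (addd_ne hd j k)
  · have h3 : (m : ZMod (2 * d)) + (m : ZMod (2 * d)) = 0 := by linear_combination h1 - h2
    rcases two_m_zero hd hm h3 with rfl | hmd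
    · exact absurd (by simpa using h1) (addd_ne hd j k)
    · refine ⟨?_, hmd⟩
      rw [hmd] at h1
      have h1' : ((j : ℕ) : ZMod (2 * d)) + (d : ZMod (2*d))
          = ((k : ℕ) : ZMod (2 * d)) + (d : ZMod (2*d)) := by
        rw [h1, sub_eq_add_neg, neg_dd hd]
      exact fin_cast_inj hd (add_right_cancel h1')


/-- the standard generators -/
noncomputable def vgen (d m : ℕ) (e : ℂ) (k : Fin d) : MvPolynomial (ZMod (2 * d)) ℂ :=
  X ((k : ℕ) : ZMod (2 * d)) * X (((k : ℕ) : ZMod (2 * d)) - m)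
    + e • (X (((k : ℕ) : ZMod (2 * d)) + d) * X (((k : ℕ) : ZMod (2 * d)) - m + d))

lemma linind (hd : 0 < d) {m : ℕ} {e : ℂ} (hm : m ≤ d) (he : e = 1 ∨ e = -1)
    (hne : ¬(m = d ∧ e = -1)) : LinearIndependent ℂ (vgen d m e) := by
  rw [Fintype.linearIndependent_iff]
  intro c hc k
  set fk : ZMod (2 * d) →₀ ℕ :=
    Finsupp.single ((k : ℕ) : ZMod (2 * d)) 1
      + Finsupp.single (((k : ℕ) : ZMod (2 * d)) - m) 1 with hfk
  have hcf := congrArg (MvPolynomial.coeff fk) hc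
  rw [coeff_zero, coeff_sum] at hcf
  simp only [coeff_smul, smul_eq_mul] at hcf
  rw [Finset.sum_eq_single k] at hcf
  · -- coeff fk (vgen k) ≠ 0
    have hval : MvPolynomial.coeff fk (vgen d m e k) ≠ 0 := by
      rw [vgen, coeff_XXe]
      by_cases hmd : m = d
      · have he1 : e = 1 := by
          rcases he with h | h
          · exact h
          · exact absurd ⟨hmd, h⟩ hne
        have e2 : ((k:ℕ) : ZMod (2*d)) + (d : ZMod (2*d))
            = ((k:ℕ) : ZMod (2*d)) - (m : ZMod (2*d)) := by
          rw [hmd, sub_eq_add_neg, neg_dd hd]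
        have e3 : ((k:ℕ) : ZMod (2*d)) - (m : ZMod (2*d)) + (d : ZMod (2*d))
            = ((k:ℕ) : ZMod (2*d)) := by rw [hmd]; ring
        rw [e2, e3, if_pos rfl, if_pos (by rw [hfk]; exact add_comm _ _), he1]
        norm_num
      · rw [if_pos rfl, if_neg, mul_zero, add_zero]
        · exact one_ne_zero
        · intro hgf
          exact hmd (claimB hd hm hgf).2
    have := hcf
    exact by
      rcases mul_eq_zero.mp this with h | h
      · exact h
      · exact absurd h hval
  · intro j _ hjk
    rw [vgen, coeff_XXe, if_neg, if_neg, mul_zero, add_zero, mul_zero]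
    · intro hgf
      exact hjk (claimB hd hm hgf).1
    · intro hff
      exact claimA hd hm hjk hff
  · intro hk; exact absurd (Finset.mem_univ k) hk


lemma he_sq {e : ℂ} (he : e = 1 ∨ e = -1) : e * e = 1 := by
  rcases he with rfl | rfl <;> norm_num

lemma span_eq (hd : 0 < d) {l m : ℕ} {e : ℂ} (hl : l < 2) (hm : m ≤ d)
    (hml : m % 2 = l) (he : e = 1 ∨ e = -1) :
    Wlmpm d l m e = Submodule.span ℂ (Set.range (vgen d m e)) := by
  haveI : NeZero (2 * d) := ⟨by omega⟩
  apply le_antisymm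
  · rw [Wlmpm, Submodule.span_le]
    rintro p ⟨i, j, hpar, hij, rfl⟩
    have hj : j = i - (m : ZMod (2 * d)) := by rw [← hij]; ring
    subst hj
    by_cases hiv : i.val < d
    · apply Submodule.subset_span
      refine ⟨⟨i.val, hiv⟩, ?_⟩
      rw [vgen]
      simp only [cast_val_eq hd i]
    · set k : Fin d := ⟨i.val - d, by have := ZMod.val_lt i; omega⟩ with hk
      have hkc : ((k : ℕ) : ZMod (2 * d)) = i + (d : ZMod (2 * d)) := by
        have h1 : ((k : ℕ) : ZMod (2 * d)) + (d : ZMod (2*d)) = i := by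
          rw [← Nat.cast_add]
          have : (k : ℕ) + d = i.val := by have := ZMod.val_lt i; simp [hk]; omega
          rw [this, cast_val_eq hd i]
        have h2 := dd_zero hd
        linear_combination h1 - h2
      have hvk : vgen d m e k
          = X (i + (d : ZMod (2*d))) * X (i - (m : ZMod (2*d)) + (d : ZMod (2*d)))
            + e • (X i * X (i - (m : ZMod (2*d)))) := by
        rw [vgen, hkc]
        have h2 := dd_zero hd
        have e1 : i + (d : ZMod (2*d)) - (m : ZMod (2*d))
            = i - (m : ZMod (2*d)) + (d : ZMod (2*d)) := by ring
        have e2 : i + (d : ZMod (2*d)) + (d : ZMod (2*d)) = i := by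
          linear_combination h2
        have e3 : i + (d : ZMod (2*d)) - (m : ZMod (2*d)) + (d : ZMod (2*d))
            = i - (m : ZMod (2*d)) := by linear_combination h2
        rw [e2, e3, e1]
      have hmem : vgen d m e k ∈ Submodule.span ℂ (Set.range (vgen d m e)) :=
        Submodule.subset_span ⟨k, rfl⟩
      have := Submodule.smul_mem _ e hmem
      have heq : e • vgen d m e k
          = X i * X (i - (m : ZMod (2*d)))
            + e • (X (i + (d : ZMod (2*d))) * X (i - (m : ZMod (2*d)) + (d : ZMod (2*d)))) := by
        rw [hvk, smul_add, smul_smul, he_sq he, one_smul, add_comm]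
      rwa [heq] at this
  · apply Submodule.span_le.mpr
    rintro p ⟨k, rfl⟩
    apply Submodule.subset_span
    refine ⟨((k:ℕ) : ZMod (2*d)), ((k:ℕ) : ZMod (2*d)) - (m : ZMod (2*d)), ?_, ?_, rfl⟩
    · exact parity_eq hd hl hm hml (by ring)
    · ring

lemma bot_case (hd : 0 < d) {l : ℕ} : Wlmpm d l d (-1 : ℂ) = ⊥ := by
  rw [Wlmpm, Submodule.span_eq_bot]
  rintro p ⟨i, j, hpar, hij, rfl⟩
  have hj : j = i + (d : ZMod (2 * d)) := by
    have h2 := dd_zero hd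
    have : j = i - (d : ZMod (2*d)) := by rw [← hij]; ring
    rw [this]; linear_combination -h2
  subst hj
  have h2 := dd_zero hd
  have e2 : i + (d : ZMod (2*d)) + (d : ZMod (2*d)) = i := by linear_combination h2
  rw [e2, neg_smul, one_smul]; ring

lemma finrank_eq (hd : 0 < d) {l m : ℕ} {e : ℂ} (hl : l < 2) (hm : m ≤ d)
    (hml : m % 2 = l) (he : e = 1 ∨ e = -1) (hbot : Wlmpm d l m e ≠ ⊥) :
    Module.finrank ℂ (Wlmpm d l m e) = d := by
  have hne : ¬(m = d ∧ e = -1) := by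
    rintro ⟨rfl, rfl⟩
    exact hbot (bot_case hd)
  rw [span_eq hd hl hm hml he]
  rw [finrank_span_eq_card (linind hd hm he hne)]
  simp

/-- generic span-invariance helper -/
lemma map_span_mem {R M : Type*} [CommSemiring R] [AddCommMonoid M] [Module R M]
    (F : M →ₗ[R] M) {S : Set M} (h : ∀ s ∈ S, F s ∈ Submodule.span R S)
    {p : M} (hp : p ∈ Submodule.span R S) : F p ∈ Submodule.span R S := by
  have hle : Submodule.map F (Submodule.span R S) ≤ Submodule.span R S := by
    rw [Submodule.map_span, Submodule.span_le]
    rintro q ⟨s, hs, rfl⟩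
    exact h s hs
  exact hle ⟨p, hp, rfl⟩

lemma sigma_inv (hd : 0 < d) {l m : ℕ} {e : ℂ} (hl : l < 2) (hm : m ≤ d)
    (hml : m % 2 = l) : ∀ p ∈ Wlmpm d l m e, sigmaPoly (2 * d) p ∈ Wlmpm d l m e := by
  intro p hp
  rw [Wlmpm] at hp ⊢
  refine map_span_mem (sigmaPoly (2 * d)).toLinearMap ?_ hp
  rintro s ⟨i, j, hpar, hij, rfl⟩
  apply Submodule.subset_span
  refine ⟨i - 1, j - 1, ?_, by linear_combination hij, ?_⟩
  · exact parity_eq hd hl hm hml (by linear_combination hij)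
  · have e1 : ∀ a : ZMod (2 * d), (a - 1) + (d : ZMod (2 * d))
        = (a + (d : ZMod (2 * d))) - 1 := fun a => by ring
    simp only [AlgHom.toLinearMap_apply, sigmaPoly, map_add, map_mul, map_smul, rename_X, e1]

lemma tau_inv (hd : 0 < d) {l m : ℕ} {e : ℂ} :
    ∀ p ∈ Wlmpm d l m e, tauPoly (2 * d) p ∈ Wlmpm d l m e := by
  haveI : NeZero (2 * d) := ⟨by omega⟩
  set ε : ℂ := Complex.exp (2 * Real.pi * Complex.I / ((2 * d : ℕ) : ℂ)) with hε
  have h1 : ε ^ (2 * d) = 1 := by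
    rw [hε, ← Complex.exp_nat_mul]
    have hne : ((2 * d : ℕ) : ℂ) ≠ 0 := Nat.cast_ne_zero.mpr (by omega)
    rw [mul_div_assoc, mul_comm ((2 * d : ℕ) : ℂ), mul_assoc, div_mul_cancel₀ _ hne]
    exact Complex.exp_two_pi_mul_I
  have tau_X : ∀ i : ZMod (2 * d), tauPoly (2 * d) (X i) = ε ^ i.val • X i := by
    intro i
    rw [tauPoly, aeval_X]
  have key : ∀ i j : ZMod (2 * d),
      tauPoly (2 * d) (X i * X j) = (ε ^ i.val * ε ^ j.val) • (X i * X j) := by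
    intro i j
    rw [map_mul, tau_X, tau_X, smul_mul_assoc, mul_smul_comm, smul_smul]
  have hval : ∀ i : ZMod (2 * d), ε ^ (i + (d : ZMod (2 * d))).val = ε ^ (i.val + d) := by
    intro i
    rw [ZMod.val_add, ZMod.val_cast_of_lt (show d < 2 * d by omega), ← pow_eq_pow_mod _ h1]
  have shift : ∀ i j : ZMod (2 * d),
      ε ^ (i + (d : ZMod (2 * d))).val * ε ^ (j + (d : ZMod (2 * d))).val
        = ε ^ i.val * ε ^ j.val := by
    intro i j
    rw [hval, hval, ← pow_add, ← pow_add,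
      show i.val + d + (j.val + d) = i.val + j.val + 2 * d by omega, pow_add, h1, mul_one]
  intro p hp
  rw [Wlmpm] at hp ⊢
  refine map_span_mem (tauPoly (2 * d)).toLinearMap ?_ hp
  rintro s ⟨i, j, hpar, hij, rfl⟩
  have hs : (tauPoly (2 * d)).toLinearMap
        (X i * X j + e • (X (i + (d : ZMod (2*d))) * X (j + (d : ZMod (2*d)))))
      = (ε ^ i.val * ε ^ j.val) •
        (X i * X j + e • (X (i + (d : ZMod (2*d))) * X (j + (d : ZMod (2*d))))) := by
    rw [AlgHom.toLinearMap_apply, map_add, map_smul, key, key, shift, smul_add, smul_comm e]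
  rw [hs]
  exact Submodule.smul_mem _ _ (Submodule.subset_span ⟨i, j, hpar, hij, rfl⟩)

lemma sup_eq (hd : 0 < d) {l : ℕ} {e : ℂ} (hl : l < 2) :
    (⨆ m : { m : Fin (d + 1) // (m : ℕ) % 2 = l }, Wlmpm d l m.1 e) = Wlpm d l e := by
  haveI : NeZero (2 * d) := ⟨by omega⟩
  apply le_antisymm
  · apply iSup_le
    rintro ⟨⟨m, hmlt⟩, hml⟩
    rw [Wlmpm, Wlpm]
    apply Submodule.span_mono
    rintro p ⟨i, j, h1, h2, h3⟩
    exact ⟨i, j, h1, h3⟩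
  · rw [Wlpm, Submodule.span_le]
    rintro p ⟨i, j, hpar, rfl⟩
    have hm0lt : (i - j).val < 2 * d := ZMod.val_lt _
    have hm0p : (i - j).val % 2 = l := by rw [← core_parity hd i j, hpar]
    by_cases hc : (i - j).val ≤ d
    · have hmem : (X i * X j + e • (X (i + (d : ZMod (2*d))) * X (j + (d : ZMod (2*d)))))
          ∈ Wlmpm d l (i - j).val e :=
        Submodule.subset_span ⟨i, j, hpar, (cast_val_eq hd (i - j)).symm, rfl⟩
      exact le_iSup (fun m : { m : Fin (d + 1) // (m : ℕ) % 2 = l } => Wlmpm d l m.1 e)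
        ⟨⟨(i - j).val, by omega⟩, hm0p⟩ hmem
    · have hne0 : i - j ≠ 0 := by
        intro h
        rw [h, ZMod.val_zero] at hc
        exact hc (Nat.zero_le d)
      have hm1 : (j - i).val = 2 * d - (i - j).val := by
        rw [show j - i = -(i - j) by ring, ZMod.neg_val, if_neg hne0]
      have hm1p : (j - i).val % 2 = l := by
        have h4 := (core_parity hd j i).symm
        rw [add_comm j i] at h4
        rw [h4, hpar]
      have hmem : (X i * X j + e • (X (i + (d : ZMod (2*d))) * X (j + (d : ZMod (2*d)))))
          ∈ Wlmpm d l (j - i).val e := by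
        apply Submodule.subset_span
        refine ⟨j, i, by rw [add_comm j i]; exact hpar, (cast_val_eq hd (j - i)).symm, by ring⟩
      exact le_iSup (fun m : { m : Fin (d + 1) // (m : ℕ) % 2 = l } => Wlmpm d l m.1 e)
        ⟨⟨(j - i).val, by omega⟩, hm1p⟩ hmem

/-- exponent classes -/
def Dset (d m : ℕ) : Set (ZMod (2 * d) →₀ ℕ) :=
  { f | ∃ i j : ZMod (2 * d), i - j = (m : ZMod (2 * d))
      ∧ f = Finsupp.single i 1 + Finsupp.single j 1 }

/-- polynomials supported on a set of exponents -/
noncomputable def suppSub (d : ℕ) (A : Set (ZMod (2 * d) →₀ ℕ)) :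
    Submodule ℂ (MvPolynomial (ZMod (2 * d)) ℂ) where
  carrier := { p | ∀ f ∉ A, MvPolynomial.coeff f p = 0 }
  add_mem' := by
    intro a b ha hb f hf
    rw [coeff_add, ha f hf, hb f hf, add_zero]
  zero_mem' := by intro f _; exact coeff_zero f
  smul_mem' := by
    intro c p hp f hf
    rw [coeff_smul, hp f hf, smul_zero]

lemma W_le_supp (hd : 0 < d) {l m : ℕ} {e : ℂ} : Wlmpm d l m e ≤ suppSub d (Dset d m) := by
  rw [Wlmpm, Submodule.span_le]
  rintro p ⟨i, j, hpar, hij, rfl⟩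
  intro f hf
  rw [coeff_XXe, if_neg, if_neg, mul_zero, add_zero]
  · intro h
    exact hf ⟨i + (d : ZMod (2*d)), j + (d : ZMod (2*d)), by linear_combination hij, h.symm⟩
  · intro h
    exact hf ⟨i, j, hij, h.symm⟩

lemma supp_mono {A B : Set (ZMod (2 * d) →₀ ℕ)} (h : A ⊆ B) :
    suppSub d A ≤ suppSub d B :=
  fun _ hp f hf => hp f (fun hfA => hf (h hfA))

lemma supp_disjoint {A B : Set (ZMod (2 * d) →₀ ℕ)} (h : Disjoint A B) :
    Disjoint (suppSub d A) (suppSub d B) := by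
  rw [Submodule.disjoint_def]
  intro p hpA hpB
  apply MvPolynomial.ext
  intro f
  rw [coeff_zero]
  by_cases hA : f ∈ A
  · exact hpB f (Set.disjoint_left.mp h hA)
  · exact hpA f hA

lemma Dset_disjoint (hd : 0 < d) {m m' : ℕ} (hm : m ≤ d) (hm' : m' ≤ d) (hne : m ≠ m') :
    Disjoint (Dset d m) (Dset d m') := by
  rw [Set.disjoint_left]
  rintro f ⟨i, j, hij, rfl⟩ ⟨i', j', hij', hf⟩
  rcases pair_eq hf with ⟨rfl, rfl⟩ | ⟨rfl, rfl⟩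
  · exact hne (natCast_m_inj hd hm hm' (by rw [← hij, ← hij']))
  · have hz : ((m + m' : ℕ) : ZMod (2 * d)) = 0 := by
      push_cast
      linear_combination -hij - hij'
    rw [ZMod.natCast_eq_zero_iff] at hz
    rcases Nat.eq_zero_or_pos (m + m') with h0 | hpos
    · omega
    · have := Nat.le_of_dvd hpos hz
      omega

lemma indep (hd : 0 < d) {l : ℕ} {e : ℂ} :
    iSupIndep (fun m : { m : Fin (d + 1) // (m : ℕ) % 2 = l } => Wlmpm d l m.1 e) := by
  intro M
  refine Disjoint.mono (W_le_supp hd) ?_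
    (supp_disjoint (B := ⋃ (j : { m : Fin (d + 1) // (m : ℕ) % 2 = l }) (_ : j ≠ M),
      Dset d j.1) ?_)
  · apply iSup_le
    intro j
    apply iSup_le
    intro hjM
    exact (W_le_supp hd).trans (supp_mono (Set.subset_iUnion₂
      (s := fun (j' : { m : Fin (d + 1) // (m : ℕ) % 2 = l }) (_ : j' ≠ M) => Dset d j'.1)
      j hjM))
  · rw [Set.disjoint_left]
    intro f hfM hfU
    simp only [Set.mem_iUnion] at hfU
    obtain ⟨j, hjM, hfj⟩ := hfU
    have hMd : (M.1 : ℕ) ≤ d := by omega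
    have hjd : (j.1 : ℕ) ≤ d := by omega
    have hvne : (M.1 : ℕ) ≠ (j.1 : ℕ) := by
      intro h
      exact hjM (Subtype.ext (Fin.ext h.symm))
    exact Set.disjoint_left.mp (Dset_disjoint hd hMd hjd hvne) hfM hfj


end WlmAux

/-- for `n = 2d`, each `W_{l,m}^±` (`l ∈ {0,1}`, `0 ≤ m ≤ d`, `m ≡ l (mod 2)`)
is `d`-dimensional when nonzero, is invariant under σ and τ, and
`W_l^± = ⊕_m W_{l,m}^±`. -/
theorem Wlm_decomposition (d : ℕ) (hd : 0 < d) :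
    (∀ (l m : ℕ) (e : ℂ), l < 2 → m ≤ d → m % 2 = l → (e = 1 ∨ e = -1) →
      (Wlmpm d l m e ≠ ⊥ → Module.finrank ℂ (Wlmpm d l m e) = d) ∧
      (∀ p ∈ Wlmpm d l m e, sigmaPoly (2 * d) p ∈ Wlmpm d l m e) ∧
      (∀ p ∈ Wlmpm d l m e, tauPoly (2 * d) p ∈ Wlmpm d l m e)) ∧
    (∀ (l : ℕ) (e : ℂ), l < 2 → (e = 1 ∨ e = -1) →
      (⨆ m : { m : Fin (d + 1) // (m : ℕ) % 2 = l }, Wlmpm d l m.1 e) = Wlpm d l e ∧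
      iSupIndep (fun m : { m : Fin (d + 1) // (m : ℕ) % 2 = l } => Wlmpm d l m.1 e)) := by
  constructor
  · intro l m e hl hm hml he
    exact ⟨WlmAux.finrank_eq hd hl hm hml he, WlmAux.sigma_inv hd hl hm hml, WlmAux.tau_inv hd⟩
  · intro l e hl he
    exact ⟨WlmAux.sup_eq hd hl, WlmAux.indep hd⟩
end

section
/- For n = 2d with d odd, the multiplicities in the decomposition Sym^2(C^{2d}) ≅ a V_0^+ ⊕ b V_0^- ⊕ c V_1^+ ⊕ e V_1^- into d-dimensional H_{2d}-modules are a = b = c = (d+1)/2 and e = (d-1)/2; in particular dim W_0^+ = dim W_0^- = dim W_1^+ = d(d+1)/2 and dim W_1^- = d(d-1)/2. -/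
/-!
Write `P_e(i, j) = x_i x_j + e x_{i+d} x_{j+d}` and let `V_r` be the span of the σ-orbit
`P_e(i, i + r)`, `i ∈ ℤ/2d`; it is τ-stable since τ scales each `P_e(i, j)`. As `i + j ≡ j - i`
(mod 2), `W_l^e` is the sum of the `V_r` with `r ≡ l` (mod 2). Symmetry of `P_e` gives
`V_{-r} = V_r`, so `0 ≤ r ≤ d` suffices, and `P_e(i + d, j + d) = e P_e(i, j)` (for `e = ±1`) shows
that `V_r` is spanned by the `P_e(i, i + r)` with `0 ≤ i < d`; for `e = -1` these vanish when
`r = d`. For `0 ≤ i < d` and `0 ≤ r ≤ d` the monomial `x_i x_{i+r}` occurs in exactly one of the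
remaining generators, so they are linearly independent, and `W_l^e` is the direct sum of the
`d`-dimensional `V_r`. For `d` odd there are `(d + 1) / 2` admissible `r`, or `(d - 1) / 2` when
`l = 1` and `e = -1`.
-/


open Module MvPolynomial

/-- `W` decomposes as a direct sum of `k` `d`-dimensional `H_{2d}`-submodules. -/
def DecomposesInto (d : ℕ) (W : Submodule ℂ (MvPolynomial (ZMod (2 * d)) ℂ)) (k : ℕ) : Prop :=
  ∃ f : Fin k → Submodule ℂ (MvPolynomial (ZMod (2 * d)) ℂ),
    iSupIndep f ∧ (⨆ i, f i) = W ∧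
    ∀ i, Module.finrank ℂ (f i) = d ∧
      (∀ p ∈ f i, sigmaPoly (2 * d) p ∈ f i) ∧ (∀ p ∈ f i, tauPoly (2 * d) p ∈ f i)


theorem linearIndependent_of_diagonal {K V ι : Type*} [Field K] [AddCommGroup V] [Module K V]
    {v : ι → V} (φ : ι → V →ₗ[K] K) (hdiag : ∀ i, φ i (v i) ≠ 0)
    (hoff : ∀ i j, j ≠ i → φ i (v j) = 0) : LinearIndependent K v := by
  classical
  rw [linearIndependent_iff']
  intro s g hg i hi
  have h := congrArg (φ i) hg
  rw [map_sum, map_zero, Finset.sum_eq_single i (fun j _ hj => by rw [map_smul, hoff i j hj,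
    smul_zero]) (fun h => absurd hi h), map_smul, smul_eq_mul] at h
  exact (mul_eq_zero.mp h).resolve_right (hdiag i)

section Fibers

variable {R M ι κ : Type*} [Semiring R] [AddCommMonoid M] [Module R M] {v : ι × κ → M}

theorem LinearIndependent.iSupIndep_span_fiber (hv : LinearIndependent R v) :
    iSupIndep fun i => Submodule.span R (Set.range fun j => v (i, j)) := by
  have hfiber : ∀ i, Set.range (fun j => v (i, j)) = v '' {p | p.1 = i} := fun i => by
    ext; simp [eq_comm]
  intro i
  refine (hv.disjoint_span_image (s := {p | p.1 = i}) (t := {p | p.1 ≠ i})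
    (Set.disjoint_left.mpr fun _ h h' => h' h)).mono (by simp only [hfiber, le_rfl]) ?_
  refine iSup₂_le fun i' hi' => Submodule.span_mono ?_
  rw [hfiber]
  exact Set.image_mono fun p (hp : p.1 = i') => hp.trans_ne hi'

theorem iSup_span_fiber :
    ⨆ i, Submodule.span R (Set.range fun j => v (i, j)) = Submodule.span R (Set.range v) := by
  rw [← Submodule.span_iUnion]
  congr 1
  ext; simp

end Fibers

theorem natCast_eq_natCast_cases {N x y : ℕ} (hx : x < 2 * N) (hy : y < 2 * N)
    (h : (x : ZMod N) = y) : x = y ∨ x + N = y ∨ y + N = x := by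
  rw [ZMod.natCast_eq_natCast_iff'] at h
  have hx' := Nat.div_add_mod x N
  have hy' := Nat.div_add_mod y N
  have : x / N < 2 := Nat.div_lt_of_lt_mul (by omega)
  have : y / N < 2 := Nat.div_lt_of_lt_mul (by omega)
  interval_cases (x / N) <;> interval_cases (y / N) <;> omega

theorem sym2_natCast_eq_cases {N a b c f : ℕ} (ha : a < 2 * N) (hb : b < 2 * N)
    (hc : c < 2 * N) (hf : f < 2 * N) (h : s((a : ZMod N), (b : ZMod N)) = s((c : ZMod N), f)) :
    ((a = c ∨ a + N = c ∨ c + N = a) ∧ (b = f ∨ b + N = f ∨ f + N = b)) ∨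
      ((a = f ∨ a + N = f ∨ f + N = a) ∧ (b = c ∨ b + N = c ∨ c + N = b)) := by
  rcases Sym2.eq_iff.mp h with ⟨h₁, h₂⟩ | ⟨h₁, h₂⟩
  · exact .inl ⟨natCast_eq_natCast_cases ha hc h₁, natCast_eq_natCast_cases hb hf h₂⟩
  · exact .inr ⟨natCast_eq_natCast_cases ha hf h₁, natCast_eq_natCast_cases hb hc h₂⟩

section Generators

variable {d : ℕ}

noncomputable def wlpmGen (d : ℕ) (e : ℂ) (i j : ZMod (2 * d)) : MvPolynomial (ZMod (2 * d)) ℂ :=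
  X i * X j + e • (X (i + (d : ZMod (2 * d))) * X (j + (d : ZMod (2 * d))))

theorem add_natCast_add_natCast (a : ZMod (2 * d)) : a + d + d = a := by
  have h : ((2 * d : ℕ) : ZMod (2 * d)) = 0 := ZMod.natCast_self _
  push_cast at h
  linear_combination h

theorem wlpmGen_comm (e : ℂ) (i j : ZMod (2 * d)) : wlpmGen d e i j = wlpmGen d e j i := by
  simp only [wlpmGen, mul_comm (X i), mul_comm (X (i + _))]

theorem wlpmGen_add_natCast {e : ℂ} (he : e * e = 1) (i j : ZMod (2 * d)) :
    wlpmGen d e (i + d) (j + d) = e • wlpmGen d e i j := by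
  rw [wlpmGen, wlpmGen, add_natCast_add_natCast, add_natCast_add_natCast, smul_add, smul_smul, he,
    one_smul, add_comm]

theorem wlpmGen_neg_one_add_natCast (i : ZMod (2 * d)) : wlpmGen d (-1) i (i + d) = 0 := by
  rw [wlpmGen, add_natCast_add_natCast, neg_one_smul, mul_comm (X (i + _)), add_neg_cancel]

theorem sigmaPoly_wlpmGen (e : ℂ) (i j : ZMod (2 * d)) :
    sigmaPoly (2 * d) (wlpmGen d e i j) = wlpmGen d e (i - 1) (j - 1) := by
  simp only [sigmaPoly, wlpmGen, map_add, map_mul, map_smul, rename_X, add_sub_right_comm]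

variable [NeZero d]

theorem tauPoly_wlpmGen (e : ℂ) (i j : ZMod (2 * d)) :
    tauPoly (2 * d) (wlpmGen d e i j) =
      Complex.exp (2 * Real.pi * Complex.I / (2 * d : ℕ)) ^ (i.val + j.val) • wlpmGen d e i j := by
  have hε := Complex.isPrimitiveRoot_exp (2 * d) (NeZero.ne _)
  have hshift : Complex.exp (2 * Real.pi * Complex.I / (2 * d : ℕ)) ^ ((i + d).val + (j + d).val) =
      Complex.exp (2 * Real.pi * Complex.I / (2 * d : ℕ)) ^ (i.val + j.val) := by
    rw [(hε.isOfFinOrder (NeZero.ne _)).pow_inj_mod, ← hε.eq_orderOf,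
      ← ZMod.natCast_eq_natCast_iff']
    push_cast [ZMod.natCast_zmod_val]
    linear_combination add_natCast_add_natCast (i + j)
  simp only [tauPoly, wlpmGen, map_add, map_mul, map_smul, aeval_X, smul_mul_smul_comm, ← pow_add,
    hshift, smul_add, smul_comm e]

theorem val_add_mod_two (a b : ZMod (2 * d)) : (a + b).val % 2 = (a.val + b.val) % 2 := by
  rw [ZMod.val_add, Nat.mod_mod_of_dvd _ (dvd_mul_right 2 d)]

end Generators

section Components

variable {d : ℕ}

noncomputable def wlpmComponent (d : ℕ) (e : ℂ) (r : ZMod (2 * d)) :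
    Submodule ℂ (MvPolynomial (ZMod (2 * d)) ℂ) :=
  Submodule.span ℂ (Set.range fun i => wlpmGen d e i (i + r))

theorem wlpmGen_mem_wlpmComponent (e : ℂ) (i j : ZMod (2 * d)) :
    wlpmGen d e i j ∈ wlpmComponent d e (j - i) :=
  Submodule.subset_span ⟨i, by simp only [add_sub_cancel]⟩

theorem wlpmComponent_neg (e : ℂ) (r : ZMod (2 * d)) :
    wlpmComponent d e (-r) = wlpmComponent d e r := by
  have hsub : ∀ r : ZMod (2 * d), wlpmComponent d e (-r) ≤ wlpmComponent d e r := fun r =>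
    Submodule.span_le.mpr <| Set.range_subset_iff.mpr fun i => by
      rw [wlpmGen_comm]
      exact Submodule.subset_span ⟨i + -r, by simp only [neg_add_cancel_right]⟩
  exact le_antisymm (hsub r) (by simpa using hsub (-r))

theorem sigmaPoly_mem_wlpmComponent (e : ℂ) (r : ZMod (2 * d)) {p : MvPolynomial (ZMod (2 * d)) ℂ}
    (hp : p ∈ wlpmComponent d e r) : sigmaPoly (2 * d) p ∈ wlpmComponent d e r := by
  refine (Submodule.map_span_le (sigmaPoly (2 * d)).toLinearMap _ _).mpr ?_ ⟨p, hp, rfl⟩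
  rintro _ ⟨i, rfl⟩
  change sigmaPoly (2 * d) (wlpmGen d e i (i + r)) ∈ _
  rw [sigmaPoly_wlpmGen, add_sub_right_comm]
  exact Submodule.subset_span ⟨i - 1, rfl⟩

variable [NeZero d]

theorem tauPoly_mem_wlpmComponent (e : ℂ) (r : ZMod (2 * d)) {p : MvPolynomial (ZMod (2 * d)) ℂ}
    (hp : p ∈ wlpmComponent d e r) : tauPoly (2 * d) p ∈ wlpmComponent d e r := by
  refine (Submodule.map_span_le (tauPoly (2 * d)).toLinearMap _ _).mpr ?_ ⟨p, hp, rfl⟩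
  rintro _ ⟨i, rfl⟩
  exact (tauPoly_wlpmGen e i (i + r)).symm ▸ Submodule.smul_mem _ _ (Submodule.subset_span ⟨i, rfl⟩)

theorem wlpmComponent_eq_span_fin {e : ℂ} (he : e * e = 1) (r : ZMod (2 * d)) :
    wlpmComponent d e r =
      Submodule.span ℂ (Set.range fun i : Fin d => wlpmGen d e (i : ℕ) ((i : ℕ) + r)) := by
  refine le_antisymm (Submodule.span_le.mpr <| Set.range_subset_iff.mpr fun a => ?_)
    (Submodule.span_mono <| Set.range_subset_iff.mpr fun i => ⟨_, rfl⟩)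
  have ha : a.val < 2 * d := ZMod.val_lt a
  by_cases hlow : a.val < d
  · exact Submodule.subset_span ⟨⟨a.val, hlow⟩, by simp⟩
  · have hshift : (((a.val - d : ℕ) : ZMod (2 * d))) + d = a := by
      rw [← Nat.cast_add, Nat.sub_add_cancel (by omega), ZMod.natCast_zmod_val]
    rw [← hshift, add_right_comm, wlpmGen_add_natCast he]
    exact Submodule.smul_mem _ _ (Submodule.subset_span ⟨⟨a.val - d, by omega⟩, rfl⟩)

theorem wlpmComponent_le_wlpm {e : ℂ} {l : ℕ} {r : ZMod (2 * d)} (hr : r.val % 2 = l) :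
    wlpmComponent d e r ≤ Wlpm d l e := by
  refine Submodule.span_le.mpr <| Set.range_subset_iff.mpr fun i => Submodule.subset_span ?_
  refine ⟨i, i + r, ?_, rfl⟩
  have h₁ := val_add_mod_two i r
  have h₂ := val_add_mod_two i (i + r)
  omega

theorem exists_natCast_eq_or_eq_neg (r : ZMod (2 * d)) :
    ∃ v ≤ d, v % 2 = r.val % 2 ∧ ((v : ZMod (2 * d)) = r ∨ (v : ZMod (2 * d)) = -r) := by
  have hr : r.val < 2 * d := ZMod.val_lt r
  by_cases hlow : r.val ≤ d
  · exact ⟨r.val, hlow, rfl, .inl (ZMod.natCast_zmod_val r)⟩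
  · refine ⟨2 * d - r.val, by omega, by omega, .inr ?_⟩
    rw [Nat.cast_sub hr.le, ZMod.natCast_zmod_val, sub_eq_neg_add, add_eq_left]
    exact_mod_cast ZMod.natCast_self (2 * d)

theorem wlpm_le_iSup_wlpmComponent {e : ℂ} {l k : ℕ} {rep : Fin k → ℕ}
    (hcover : ∀ v ≤ d, v % 2 = l → (∃ m, rep m = v) ∨ (v = d ∧ e = -1)) :
    Wlpm d l e ≤ ⨆ m, wlpmComponent d e (rep m) := by
  refine Submodule.span_le.mpr ?_
  rintro _ ⟨i, j, hij, rfl⟩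
  change wlpmGen d e i j ∈ ⨆ m, wlpmComponent d e (rep m)
  obtain ⟨v, hv_le, hv_par, hv⟩ := exists_natCast_eq_or_eq_neg (j - i)
  have hvl : v % 2 = l := by
    have h₁ := val_add_mod_two (j - i) i
    have h₂ := val_add_mod_two i j
    rw [sub_add_cancel] at h₁
    omega
  rcases hcover v hv_le hvl with ⟨m, rfl⟩ | ⟨hv_eq, rfl⟩
  · refine Submodule.mem_iSup_of_mem m ?_
    rcases hv with hv | hv
    · exact hv ▸ wlpmGen_mem_wlpmComponent e i j
    · rw [← wlpmComponent_neg, hv, neg_neg]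
      exact wlpmGen_mem_wlpmComponent e i j
  · rw [hv_eq] at hv
    suffices wlpmGen d (-1) i j = 0 by rw [this]; exact zero_mem _
    rcases hv with hv | hv
    · rw [show j = i + d by rw [hv]; ring, wlpmGen_neg_one_add_natCast]
    · rw [wlpmGen_comm, show i = j + d by rw [hv]; ring, wlpmGen_neg_one_add_natCast]

end Components

theorem MvPolynomial.coeff_X_mul_X {R σ : Type*} [CommSemiring R] [DecidableEq σ] (a b c f : σ) :
    coeff (Finsupp.single a 1 + Finsupp.single b 1) (X c * X f : MvPolynomial σ R) =
      if s(c, f) = s(a, b) then 1 else 0 := by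
  rw [X, X, monomial_mul, one_mul, coeff_monomial]
  simp only [Finsupp.single_add_single_eq_single_add_single one_ne_zero one_ne_zero, Sym2.eq_iff]
  simp

section Coefficients

variable {d : ℕ}

theorem coeff_wlpmGen (e : ℂ) (a b i j : ZMod (2 * d)) :
    coeff (Finsupp.single a 1 + Finsupp.single b 1) (wlpmGen d e i j) =
      (if s(i, j) = s(a, b) then 1 else 0) + if s(i + d, j + d) = s(a, b) then e else 0 := by
  rw [wlpmGen, coeff_add, coeff_smul, coeff_X_mul_X, coeff_X_mul_X, smul_eq_mul, mul_ite, mul_one,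
    mul_zero]

variable {i i' r r' : ℕ} (hi : i < d) (hi' : i' < d) (hr : r ≤ d) (hr' : r' ≤ d)
include hi hi' hr hr'

theorem eq_of_sym2_natCast_eq
    (h : s((i' : ZMod (2 * d)), (i' + r' : ZMod (2 * d))) = s((i : ZMod (2 * d)), i + r)) :
    i' = i ∧ r' = r := by
  norm_cast at h
  have := sym2_natCast_eq_cases (by omega) (by omega) (by omega) (by omega) h
  omega

theorem eq_of_sym2_natCast_add_eq
    (h : s((i' + d : ZMod (2 * d)), (i' + r' + d : ZMod (2 * d))) = s((i : ZMod (2 * d)), i + r)) :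
    i' = i ∧ r' = d ∧ r = d := by
  norm_cast at h
  have := sym2_natCast_eq_cases (by omega) (by omega) (by omega) (by omega) h
  omega

end Coefficients

theorem linearIndependent_wlpmGen {d : ℕ} {e : ℂ} {ι : Type*} {rep : ι → ℕ}
    (hle : ∀ m, rep m ≤ d) (hinj : Function.Injective rep) (hde : ∀ m, rep m = d → e ≠ -1) :
    LinearIndependent ℂ fun p : ι × Fin d =>
      wlpmGen d e ((p.2 : ℕ) : ZMod (2 * d)) ((p.2 : ℕ) + (rep p.1 : ZMod (2 * d))) := by
  classical
  refine linearIndependent_of_diagonal (fun p => lcoeff ℂ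
    (Finsupp.single ((p.2 : ℕ) : ZMod (2 * d)) 1 +
      Finsupp.single (((p.2 : ℕ) : ZMod (2 * d)) + rep p.1) 1)) ?_ ?_
  · rintro ⟨m, i⟩
    simp only [lcoeff_apply, coeff_wlpmGen, if_true]
    by_cases hm : rep m = d
    · have hsym : s(((i : ℕ) : ZMod (2 * d)) + d, (i : ℕ) + (rep m : ZMod (2 * d)) + d) =
          s(((i : ℕ) : ZMod (2 * d)), (i : ℕ) + (rep m : ZMod (2 * d))) := by
        rw [hm, add_natCast_add_natCast, Sym2.eq_swap]
      rw [if_pos hsym]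
      exact fun h => hde m hm (by linear_combination h)
    · rw [if_neg fun h => hm (eq_of_sym2_natCast_add_eq i.2 i.2 (hle m) (hle m) h).2.2]
      simp
  · rintro ⟨m, i⟩ ⟨m', i'⟩ hne
    simp only [lcoeff_apply, coeff_wlpmGen]
    rw [if_neg, if_neg, add_zero]
    · intro h
      obtain ⟨hi, hr', hr⟩ := eq_of_sym2_natCast_add_eq i.2 i'.2 (hle m) (hle m') h
      exact hne (Prod.ext (hinj (hr'.trans hr.symm)) (Fin.ext hi))
    · intro h
      obtain ⟨hi, hr⟩ := eq_of_sym2_natCast_eq i.2 i'.2 (hle m) (hle m') h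
      exact hne (Prod.ext (hinj hr) (Fin.ext hi))

theorem decomposesInto_wlpm_of_reps {d l k : ℕ} [NeZero d] {e : ℂ} (he : e * e = 1)
    {rep : Fin k → ℕ} (hle : ∀ m, rep m ≤ d) (hinj : Function.Injective rep)
    (hpar : ∀ m, rep m % 2 = l) (hde : ∀ m, rep m = d → e ≠ -1)
    (hcover : ∀ v ≤ d, v % 2 = l → (∃ m, rep m = v) ∨ (v = d ∧ e = -1)) :
    DecomposesInto d (Wlpm d l e) k ∧ finrank ℂ (Wlpm d l e) = d * k := by
  set v := fun p : Fin k × Fin d =>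
    wlpmGen d e ((p.2 : ℕ) : ZMod (2 * d)) ((p.2 : ℕ) + (rep p.1 : ZMod (2 * d)))
  have hv : LinearIndependent ℂ v := linearIndependent_wlpmGen hle hinj hde
  have hspan : ∀ m, wlpmComponent d e (rep m) = Submodule.span ℂ (Set.range fun i => v (m, i)) :=
    fun m => wlpmComponent_eq_span_fin he _
  have hW : ⨆ m, wlpmComponent d e (rep m) = Wlpm d l e := by
    refine le_antisymm (iSup_le fun m => wlpmComponent_le_wlpm ?_)
      (wlpm_le_iSup_wlpmComponent hcover)
    rw [ZMod.val_natCast, Nat.mod_mod_of_dvd _ (dvd_mul_right 2 d), hpar]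
  refine ⟨⟨fun m => wlpmComponent d e (rep m),
    by simpa only [hspan] using hv.iSupIndep_span_fiber, hW, fun m =>
      ⟨?_, fun _ => sigmaPoly_mem_wlpmComponent e _, fun _ => tauPoly_mem_wlpmComponent e _⟩⟩, ?_⟩
  · beta_reduce
    rw [hspan, finrank_span_eq_card (b := fun i => v (m, i))
      (hv.comp _ (Prod.mk_right_injective m)), Fintype.card_fin]
  · rw [← hW, iSup_congr hspan, iSup_span_fiber, finrank_span_eq_card hv, Fintype.card_prod,
      Fintype.card_fin, Fintype.card_fin, mul_comm]

section Odd

variable {d : ℕ} (hodd : Odd d)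
include hodd

theorem decomposesInto_wlpm_of_odd {l : ℕ} {e : ℂ} (he : e * e = 1) (hl : l < 2)
    (hl_e : l = 0 ∨ e = 1) :
    DecomposesInto d (Wlpm d l e) ((d + 1) / 2) ∧ finrank ℂ (Wlpm d l e) = d * ((d + 1) / 2) := by
  have : NeZero d := ⟨hodd.pos.ne'⟩
  have hd : d % 2 = 1 := Nat.odd_iff.mp hodd
  refine decomposesInto_wlpm_of_reps he (rep := fun m => 2 * m + l) (fun m => by omega)
    (fun m m' h => Fin.ext (by dsimp only at h; omega)) (fun m => by omega) (fun m hm => ?_)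
    (fun v hv hvl => .inl ⟨⟨v / 2, by omega⟩, by dsimp only; omega⟩)
  rcases hl_e with rfl | rfl
  · omega
  · norm_num

theorem decomposesInto_wlpm_one_neg_one_of_odd :
    DecomposesInto d (Wlpm d 1 (-1)) ((d - 1) / 2) ∧
      finrank ℂ (Wlpm d 1 (-1)) = d * ((d - 1) / 2) := by
  have : NeZero d := ⟨hodd.pos.ne'⟩
  have hd : d % 2 = 1 := Nat.odd_iff.mp hodd
  refine decomposesInto_wlpm_of_reps (by norm_num) (rep := fun m => 2 * m + 1) (fun m => by omega)
    (fun m m' h => Fin.ext (by dsimp only at h; omega)) (fun m => by omega) (fun m hm => by omega)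
    (fun v hv hvl => ?_)
  by_cases hvd : v = d
  · exact .inr ⟨hvd, rfl⟩
  · exact .inl ⟨⟨v / 2, by omega⟩, by dsimp only; omega⟩

end Odd

theorem multiplicities_d_odd_general (d : ℕ) (hodd : Odd d) :
    DecomposesInto d (Wlpm d 0 1) ((d + 1) / 2) ∧
    DecomposesInto d (Wlpm d 0 (-1)) ((d + 1) / 2) ∧
    DecomposesInto d (Wlpm d 1 1) ((d + 1) / 2) ∧
    DecomposesInto d (Wlpm d 1 (-1)) ((d - 1) / 2) ∧
    Module.finrank ℂ (Wlpm d 0 1) = d * (d + 1) / 2 ∧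
    Module.finrank ℂ (Wlpm d 0 (-1)) = d * (d + 1) / 2 ∧
    Module.finrank ℂ (Wlpm d 1 1) = d * (d + 1) / 2 ∧
    Module.finrank ℂ (Wlpm d 1 (-1)) = d * (d - 1) / 2 := by
  have hd2 : d % 2 = 1 := Nat.odd_iff.mp hodd
  rw [Nat.mul_div_assoc d (by omega : 2 ∣ d + 1), Nat.mul_div_assoc d (by omega : 2 ∣ d - 1)]
  obtain ⟨dec0p, rank0p⟩ :=
    decomposesInto_wlpm_of_odd hodd (e := 1) (by norm_num) (by norm_num) (.inl rfl)
  obtain ⟨dec0m, rank0m⟩ :=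
    decomposesInto_wlpm_of_odd hodd (e := -1) (by norm_num) (by norm_num) (.inl rfl)
  obtain ⟨dec1p, rank1p⟩ :=
    decomposesInto_wlpm_of_odd hodd (l := 1) (by norm_num) (by norm_num) (.inr rfl)
  obtain ⟨dec1m, rank1m⟩ := decomposesInto_wlpm_one_neg_one_of_odd hodd
  exact ⟨dec0p, dec0m, dec1p, dec1m, rank0p, rank0m, rank1p, rank1m⟩

/-- for `n = 2d` with `d` odd, the multiplicities of the `d`-dimensional
`H_{2d}`-modules in `Sym²(ℂ^{2d}) = W_0^+ ⊕ W_0^- ⊕ W_1^+ ⊕ W_1^-` are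
`(d+1)/2, (d+1)/2, (d+1)/2, (d-1)/2`; in particular
`dim W_0^± = dim W_1^+ = d(d+1)/2` and `dim W_1^- = d(d-1)/2`. -/
theorem multiplicities_d_odd (d : ℕ) (hd : 0 < d) (hodd : Odd d) :
    DecomposesInto d (Wlpm d 0 1) ((d + 1) / 2) ∧
    DecomposesInto d (Wlpm d 0 (-1)) ((d + 1) / 2) ∧
    DecomposesInto d (Wlpm d 1 1) ((d + 1) / 2) ∧
    DecomposesInto d (Wlpm d 1 (-1)) ((d - 1) / 2) ∧
    Module.finrank ℂ (Wlpm d 0 1) = d * (d + 1) / 2 ∧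
    Module.finrank ℂ (Wlpm d 0 (-1)) = d * (d + 1) / 2 ∧
    Module.finrank ℂ (Wlpm d 1 1) = d * (d + 1) / 2 ∧
    Module.finrank ℂ (Wlpm d 1 (-1)) = d * (d - 1) / 2 :=
  multiplicities_d_odd_general d hodd
end

section
/- For n = 2d with d even, the decomposition Sym^2(C^{2d}) into the four subspaces W_l^± has dimensions dim W_0^+ = d(d+2)/2 and dim W_0^- = dim W_1^+ = dim W_1^- = d^2/2. -/
open Module MvPolynomial

namespace WlpmAux

variable (d : ℕ)

noncomputable def vv (e : ℂ) (a b : ℕ) : MvPolynomial (ZMod (2 * d)) ℂ :=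
  X ((a : ℕ) : ZMod (2 * d)) * X ((b : ℕ) : ZMod (2 * d)) +
    e • (X ((a + d : ℕ) : ZMod (2 * d)) * X ((b + d : ℕ) : ZMod (2 * d)))

noncomputable def ww (l : ℕ) (e : ℂ) (x : Fin d × Fin (d / 2)) :
    MvPolynomial (ZMod (2 * d)) ℂ :=
  vv d e x.1 (x.1 + l + 2 * x.2)

noncomputable def uu (x : Fin d) : MvPolynomial (ZMod (2 * d)) ℂ := vv d 1 x (x + d)

noncomputable def mon (a b : ℕ) : ZMod (2 * d) →₀ ℕ :=
  Finsupp.single ((a : ℕ) : ZMod (2 * d)) 1 + Finsupp.single ((b : ℕ) : ZMod (2 * d)) 1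

theorem cast_eq_iff (hd : 0 < d) {a b : ℕ} (ha : a < 2 * d) (hb : b < 2 * d) :
    ((a : ℕ) : ZMod (2 * d)) = ((b : ℕ) : ZMod (2 * d)) ↔ a = b := by
  rw [ZMod.natCast_eq_natCast_iff', Nat.mod_eq_of_lt ha, Nat.mod_eq_of_lt hb]

theorem mon_eq_iff (hd : 0 < d) {a b a' b' : ℕ} (ha : a < 2 * d) (hb : b < 2 * d)
    (ha' : a' < 2 * d) (hb' : b' < 2 * d) :
    mon d a b = mon d a' b' ↔ (a = a' ∧ b = b') ∨ (a = b' ∧ b = a') := by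
  unfold mon
  rw [Finsupp.single_add_single_eq_single_add_single one_ne_zero one_ne_zero]
  simp [cast_eq_iff d hd ha ha', cast_eq_iff d hd hb hb', cast_eq_iff d hd ha hb',
    cast_eq_iff d hd hb ha']

theorem X_mul_X_eq (i j : ZMod (2 * d)) :
    (X i * X j : MvPolynomial (ZMod (2 * d)) ℂ) =
      monomial (Finsupp.single i 1 + Finsupp.single j 1) 1 := by
  rw [show (X i : MvPolynomial (ZMod (2 * d)) ℂ) = monomial (Finsupp.single i 1) 1 from rfl,
    show (X j : MvPolynomial (ZMod (2 * d)) ℂ) = monomial (Finsupp.single j 1) 1 from rfl,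
    monomial_mul, one_mul]

theorem vv_eq (e : ℂ) (a b : ℕ) :
    vv d e a b = monomial (mon d a b) 1 + e • monomial (mon d (a + d) (b + d)) 1 := by
  unfold vv mon
  rw [X_mul_X_eq, X_mul_X_eq]

theorem mon_symm (a b : ℕ) : mon d a b = mon d b a := add_comm _ _

theorem mon_congr_right {b b' : ℕ} (a : ℕ) (h : ((b : ℕ) : ZMod (2 * d)) = b') :
    mon d a b = mon d a b' := by unfold mon; rw [h]

theorem cast_add_self (a : ℕ) : ((a + 2 * d : ℕ) : ZMod (2 * d)) = ((a : ℕ) : ZMod (2 * d)) := by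
  rw [Nat.cast_add, ZMod.natCast_self, add_zero]

end WlpmAux
namespace WlpmAux

variable (d : ℕ)

theorem coeff_ww (hd : 0 < d) (heven : Even d) {l : ℕ} (hl : l < 2) (e : ℂ)
    (x y : Fin d × Fin (d / 2)) :
    coeff (mon d y.1 (y.1 + l + 2 * y.2)) (ww d l e x) = if x = y then 1 else 0 := by
  obtain ⟨m, hm⟩ := heven
  obtain ⟨⟨i, hi⟩, ⟨k, hk⟩⟩ := x
  obtain ⟨⟨i₀, hi₀⟩, ⟨k₀, hk₀⟩⟩ := y
  simp only [ww, vv_eq]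
  set j := i + l + 2 * k with hj
  set j₀ := i₀ + l + 2 * k₀ with hj₀
  have hpart : mon d (i + d) (j + d) ≠ mon d i₀ j₀ := by
    intro hEq
    rcases lt_or_ge j d with hjd | hjd
    · rw [mon_eq_iff d hd (by omega) (by omega) (by omega) (by omega)] at hEq
      omega
    · have hcast : mon d (i + d) (j + d) = mon d (i + d) (j - d) := by
        apply mon_congr_right
        rw [show j + d = (j - d) + 2 * d by omega, cast_add_self]
      rw [hcast, mon_eq_iff d hd (by omega) (by omega) (by omega) (by omega)] at hEq
      omega
  have hmain : (mon d i j = mon d i₀ j₀) ↔ (i = i₀ ∧ k = k₀) := by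
    rw [mon_eq_iff d hd (by omega) (by omega) (by omega) (by omega)]
    omega
  simp only [coeff_add, coeff_smul, coeff_monomial, if_neg hpart, smul_zero, add_zero,
    Prod.mk.injEq, Fin.mk.injEq]
  simp [hmain]

theorem uu_eq (a : ℕ) (ha : a < d) :
    vv d 1 a (a + d) = monomial (mon d a (a + d)) 1 + monomial (mon d a (a + d)) 1 := by
  have h1 : mon d (a + d) (a + d + d) = mon d a (a + d) := by
    rw [mon_congr_right d (a + d) (b := a + d + d) (b' := a)
      (by rw [show a + d + d = a + 2 * d by omega, cast_add_self]), mon_symm]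
  rw [vv_eq, one_smul, h1]

theorem coeff_uu_at_w (hd : 0 < d) (heven : Even d) {l : ℕ} (hl : l < 2)
    (a : Fin d) (y : Fin d × Fin (d / 2)) :
    coeff (mon d y.1 (y.1 + l + 2 * y.2)) (uu d a) = 0 := by
  obtain ⟨m, hm⟩ := heven
  obtain ⟨a, ha⟩ := a
  obtain ⟨⟨i₀, hi₀⟩, ⟨k₀, hk₀⟩⟩ := y
  rw [uu, uu_eq d a ha]
  have hne : mon d a (a + d) ≠ mon d i₀ (i₀ + l + 2 * k₀) := by
    intro hEq
    rw [mon_eq_iff d hd (by omega) (by omega) (by omega) (by omega)] at hEq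
    omega
  simp [coeff_monomial, if_neg hne]

theorem coeff_ww_at_u (hd : 0 < d) (heven : Even d) {l : ℕ} (hl : l < 2) (e : ℂ)
    (x : Fin d × Fin (d / 2)) (a₀ : Fin d) :
    coeff (mon d a₀ (a₀ + d)) (ww d l e x) = 0 := by
  obtain ⟨m, hm⟩ := heven
  obtain ⟨⟨i, hi⟩, ⟨k, hk⟩⟩ := x
  obtain ⟨a₀, ha₀⟩ := a₀
  simp only [ww, vv_eq]
  set j := i + l + 2 * k with hj
  have h1 : mon d i j ≠ mon d a₀ (a₀ + d) := by
    intro hEq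
    rw [mon_eq_iff d hd (by omega) (by omega) (by omega) (by omega)] at hEq
    omega
  have h2 : mon d (i + d) (j + d) ≠ mon d a₀ (a₀ + d) := by
    intro hEq
    rcases lt_or_ge j d with hjd | hjd
    · rw [mon_eq_iff d hd (by omega) (by omega) (by omega) (by omega)] at hEq
      omega
    · have hcast : mon d (i + d) (j + d) = mon d (i + d) (j - d) := by
        apply mon_congr_right
        rw [show j + d = (j - d) + 2 * d by omega, cast_add_self]
      rw [hcast, mon_eq_iff d hd (by omega) (by omega) (by omega) (by omega)] at hEq
      omega
  simp [coeff_add, coeff_smul, coeff_monomial, if_neg h1, if_neg h2]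

theorem coeff_uu_at_u (hd : 0 < d) (a a₀ : Fin d) :
    coeff (mon d a₀ (a₀ + d)) (uu d a) = if a = a₀ then 2 else 0 := by
  obtain ⟨a, ha⟩ := a
  obtain ⟨a₀, ha₀⟩ := a₀
  rw [uu, uu_eq d a ha]
  have hiff : (mon d a (a + d) = mon d a₀ (a₀ + d)) ↔ a = a₀ := by
    rw [mon_eq_iff d hd (by omega) (by omega) (by omega) (by omega)]
    omega
  simp only [coeff_add, coeff_monomial, Fin.mk.injEq]
  simp [hiff]
  split <;> norm_num

end WlpmAux
namespace WlpmAux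

variable (d : ℕ)

theorem vv_mem (hd : 0 < d) {l : ℕ} {e : ℂ} (hl : l < 2) {a b : ℕ}
    (hpar : (a + b) % 2 = l) : vv d e a b ∈ Wlpm d l e := by
  haveI : NeZero (2 * d) := ⟨by omega⟩
  apply Submodule.subset_span
  refine ⟨((a : ℕ) : ZMod (2 * d)), ((b : ℕ) : ZMod (2 * d)), ?_, ?_⟩
  · have h1 : ((a : ℕ) : ZMod (2 * d)) + ((b : ℕ) : ZMod (2 * d))
        = ((a + b : ℕ) : ZMod (2 * d)) := by push_cast; ring
    rw [h1, ZMod.val_natCast, Nat.mod_mod_of_dvd _ (dvd_mul_right 2 d), hpar]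
  · unfold vv
    push_cast
    ring

theorem vv_symm (e : ℂ) (a b : ℕ) : vv d e a b = vv d e b a := by
  unfold vv
  rw [mul_comm (X ((a : ℕ) : ZMod (2 * d))),
    mul_comm (X ((a + d : ℕ) : ZMod (2 * d)))]

theorem vv_shift {e : ℂ} (he : e * e = 1) {a b : ℕ} (hda : d ≤ a) (hdb : d ≤ b) :
    vv d e a b = e • vv d e (a - d) (b - d) := by
  unfold vv
  have h1 : ((a - d + d : ℕ) : ZMod (2 * d)) = ((a : ℕ) : ZMod (2 * d)) := by
    congr 1; omega
  have h2 : ((b - d + d : ℕ) : ZMod (2 * d)) = ((b : ℕ) : ZMod (2 * d)) := by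
    congr 1; omega
  have h3 : ((a + d : ℕ) : ZMod (2 * d)) = ((a - d : ℕ) : ZMod (2 * d)) := by
    rw [show a + d = (a - d) + 2 * d by omega, cast_add_self]
  have h4 : ((b + d : ℕ) : ZMod (2 * d)) = ((b - d : ℕ) : ZMod (2 * d)) := by
    rw [show b + d = (b - d) + 2 * d by omega, cast_add_self]
  rw [h1, h2, h3, h4]
  simp only [smul_eq_C_mul]
  have hC : (C e : MvPolynomial (ZMod (2 * d)) ℂ) * C e = 1 := by
    rw [← C_mul, he, C_1]
  linear_combination (-(X ((a : ℕ) : ZMod (2 * d)) * X ((b : ℕ) : ZMod (2 * d)))) * hC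

theorem vv_swap {e : ℂ} (he : e * e = 1) {a b : ℕ} (had : a < d) (hb : d ≤ b)
    (hb2 : b < 2 * d) : vv d e a b = e • vv d e (b - d) (a + d) := by
  unfold vv
  have h1 : ((b - d + d : ℕ) : ZMod (2 * d)) = ((b : ℕ) : ZMod (2 * d)) := by
    congr 1; omega
  have h2 : ((a + d + d : ℕ) : ZMod (2 * d)) = ((a : ℕ) : ZMod (2 * d)) := by
    rw [show a + d + d = a + 2 * d by omega, cast_add_self]
  have h4 : ((b + d : ℕ) : ZMod (2 * d)) = ((b - d : ℕ) : ZMod (2 * d)) := by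
    rw [show b + d = (b - d) + 2 * d by omega, cast_add_self]
  rw [h1, h2, h4]
  simp only [smul_eq_C_mul]
  have hC : (C e : MvPolynomial (ZMod (2 * d)) ℂ) * C e = 1 := by
    rw [← C_mul, he, C_1]
  linear_combination (-(X ((a : ℕ) : ZMod (2 * d)) * X ((b : ℕ) : ZMod (2 * d)))) * hC

theorem vv_fixed_neg (a : ℕ) : vv d (-1) a (a + d) = 0 := by
  unfold vv
  have h2 : ((a + d + d : ℕ) : ZMod (2 * d)) = ((a : ℕ) : ZMod (2 * d)) := by
    rw [show a + d + d = a + 2 * d by omega, cast_add_self]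
  rw [h2, neg_smul, one_smul]
  ring

theorem vv_mem_span (hd : 0 < d) (heven : Even d) {l : ℕ} (hl : l < 2) (e : ℂ)
    {a b : ℕ} (hab : a ≤ b) (had : a < d) (hbd : b < a + d) (hpar : (a + b) % 2 = l) :
    vv d e a b ∈ Submodule.span ℂ (Set.range (ww d l e)) := by
  obtain ⟨m, hm⟩ := heven
  refine Submodule.subset_span ⟨(⟨a, had⟩, ⟨(b - a - l) / 2, by omega⟩), ?_⟩
  simp only [ww]
  congr 1
  show a + l + 2 * ((b - a - l) / 2) = b
  omega

theorem span_eq (hd : 0 < d) (heven : Even d) {l : ℕ} {e : ℂ} (hl : l < 2)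
    (he : e * e = 1) (U : Set (MvPolynomial (ZMod (2 * d)) ℂ))
    (hU : ∀ p ∈ U, p ∈ Wlpm d l e)
    (hfix : ∀ a : ℕ, a < d → (a + (a + d)) % 2 = l →
      vv d e a (a + d) ∈ Submodule.span ℂ (Set.range (ww d l e) ∪ U)) :
    Wlpm d l e = Submodule.span ℂ (Set.range (ww d l e) ∪ U) := by
  haveI : NeZero (2 * d) := ⟨by omega⟩
  have key : ∀ a b : ℕ, a ≤ b → b < 2 * d → (a + b) % 2 = l →
      vv d e a b ∈ Submodule.span ℂ (Set.range (ww d l e) ∪ U) := by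
    intro a b hab hb hpar
    have mono := Submodule.span_mono (R := ℂ)
      (Set.subset_union_left (s := Set.range (ww d l e)) (t := U))
    rcases lt_or_ge a d with had | had
    · rcases lt_or_ge b (a + d) with hbd | hbd
      · exact mono (vv_mem_span d hd heven hl e hab had hbd hpar)
      · rcases eq_or_lt_of_le hbd with heq | hlt
        · rw [← heq]
          exact hfix a had (by omega)
        · rw [vv_swap d he had (by omega) hb]
          refine Submodule.smul_mem _ _ (mono (vv_mem_span d hd heven hl e ?_ ?_ ?_ ?_))
          · omega
          · omega
          · omega
          · omega
    · rw [vv_shift d he had (le_trans had hab)]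
      refine Submodule.smul_mem _ _ (mono (vv_mem_span d hd heven hl e ?_ ?_ ?_ ?_))
      · omega
      · omega
      · omega
      · omega
  apply le_antisymm
  · rw [Wlpm, Submodule.span_le]
    rintro p ⟨i, j, hpar, rfl⟩
    have hvi : ((i.val : ℕ) : ZMod (2 * d)) = i := by
      rw [ZMod.natCast_val, ZMod.cast_id]
    have hvj : ((j.val : ℕ) : ZMod (2 * d)) = j := by
      rw [ZMod.natCast_val, ZMod.cast_id]
    have hpar' : (i.val + j.val) % 2 = l := by
      rw [ZMod.val_add, Nat.mod_mod_of_dvd _ (dvd_mul_right 2 d)] at hpar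
      exact hpar
    have hform : ∀ a b : ℕ, ((a : ℕ) : ZMod (2 * d)) = i → ((b : ℕ) : ZMod (2 * d)) = j →
        X i * X j + e • (X (i + (d : ZMod (2 * d))) * X (j + (d : ZMod (2 * d)))) =
          vv d e a b := by
      intro a b hai hbj
      unfold vv
      push_cast
      rw [hai, hbj]
    rcases le_total i.val j.val with hle | hle
    · rw [hform i.val j.val hvi hvj]
      exact key i.val j.val hle (ZMod.val_lt j) hpar'
    · rw [hform i.val j.val hvi hvj, vv_symm]
      exact key j.val i.val hle (ZMod.val_lt i) (by omega)
  · rw [Submodule.span_le]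
    rintro p (⟨x, rfl⟩ | hp)
    · exact vv_mem d hd hl (by omega)
    · exact hU p hp

end WlpmAux
namespace WlpmAux

variable (d : ℕ)

theorem li_ww (hd : 0 < d) (heven : Even d) {l : ℕ} (hl : l < 2) (e : ℂ) :
    LinearIndependent ℂ (ww d l e) := by
  rw [Fintype.linearIndependent_iff]
  intro g hg y
  have h := congrArg (lcoeff ℂ (mon d y.1 (y.1 + l + 2 * y.2))) hg
  simp only [map_sum, map_smul, lcoeff_apply, smul_eq_mul, map_zero] at h
  simp only [coeff_ww d hd heven hl e _ y] at h
  simpa [Finset.sum_ite_eq'] using h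

theorem li_plus (hd : 0 < d) (heven : Even d) :
    LinearIndependent ℂ (Sum.elim (ww d 0 1) (uu d)) := by
  rw [Fintype.linearIndependent_iff]
  intro g hg y
  have key : ∀ mtar : ZMod (2 * d) →₀ ℕ,
      (∑ x : Fin d × Fin (d / 2), g (Sum.inl x) * coeff mtar (ww d 0 1 x)) +
        ∑ a : Fin d, g (Sum.inr a) * coeff mtar (uu d a) = 0 := by
    intro mtar
    have h := congrArg (lcoeff ℂ mtar) hg
    simp only [map_sum, map_smul, lcoeff_apply, smul_eq_mul, map_zero] at h
    rw [Fintype.sum_sum_type] at h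
    simpa using h
  cases y with
  | inl y =>
    have h := key (mon d y.1 (y.1 + 2 * y.2))
    have hw : ∀ x, coeff (mon d (y.1 : ℕ) ((y.1 : ℕ) + 2 * (y.2 : ℕ))) (ww d 0 1 x)
        = if x = y then 1 else 0 :=
      fun x => by simpa using coeff_ww d hd heven (l := 0) (by norm_num) 1 x y
    have hu : ∀ a, coeff (mon d (y.1 : ℕ) ((y.1 : ℕ) + 2 * (y.2 : ℕ))) (uu d a) = 0 :=
      fun a => by simpa using coeff_uu_at_w d hd heven (l := 0) (by norm_num) a y
    simp only [hw, hu, mul_zero, mul_ite, mul_one, Finset.sum_const_zero, add_zero] at h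
    simpa [Finset.sum_ite_eq'] using h
  | inr a₀ =>
    have h := key (mon d a₀ (a₀ + d))
    have hw : ∀ x, coeff (mon d (a₀ : ℕ) ((a₀ : ℕ) + d)) (ww d 0 1 x) = 0 :=
      fun x => coeff_ww_at_u d hd heven (l := 0) (by norm_num) 1 x a₀
    have hu : ∀ a, coeff (mon d (a₀ : ℕ) ((a₀ : ℕ) + d)) (uu d a)
        = if a = a₀ then 2 else 0 :=
      fun a => coeff_uu_at_u d hd a a₀
    simp only [hw, hu, mul_zero, mul_ite, Finset.sum_const_zero, zero_add] at h
    rw [Finset.sum_ite_eq' Finset.univ a₀ (fun a => g (Sum.inr a) * 2)] at h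
    simpa using h

end WlpmAux

open WlpmAux

/-- for `n = 2d` with `d` even, the four subspaces `W_l^±` of `Sym²(ℂ^{2d})`
have dimensions `dim W_0^+ = d(d+2)/2` and `dim W_0^- = dim W_1^+ = dim W_1^- = d²/2`. -/
theorem dims_d_even (d : ℕ) (hd : 0 < d) (heven : Even d) :
    Module.finrank ℂ (Wlpm d 0 1) = d * (d + 2) / 2 ∧
    Module.finrank ℂ (Wlpm d 0 (-1)) = d ^ 2 / 2 ∧
    Module.finrank ℂ (Wlpm d 1 1) = d ^ 2 / 2 ∧
    Module.finrank ℂ (Wlpm d 1 (-1)) = d ^ 2 / 2 := by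
  obtain ⟨m, hm⟩ := heven
  have heven' : Even d := ⟨m, hm⟩
  have hcard : Fintype.card (Fin d × Fin (d / 2)) = d * (d / 2) := by
    simp [Fintype.card_prod]
  have hminus : ∀ (l : ℕ) (e : ℂ), l < 2 → e * e = 1 →
      (∀ a : ℕ, a < d → (a + (a + d)) % 2 = l →
        vv d e a (a + d) ∈ Submodule.span ℂ (Set.range (ww d l e) ∪ ∅)) →
      Module.finrank ℂ (Wlpm d l e) = d ^ 2 / 2 := by
    intro l e hl he hfix
    have hspan := span_eq d hd heven' hl he ∅ (by simp) hfix
    rw [Set.union_empty] at hspan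
    rw [hspan, finrank_span_eq_card (li_ww d hd heven' hl e), hcard]
    have h2 : d / 2 = m := by omega
    have h3 : d ^ 2 = d * d := sq d
    rw [h2, h3, hm, show (m + m) * (m + m) = 2 * ((m + m) * m) by ring,
      Nat.mul_div_cancel_left _ (by norm_num)]
  refine ⟨?_, hminus 0 (-1) (by norm_num) (by norm_num) (fun a ha hpar => by
      rw [vv_fixed_neg]; exact Submodule.zero_mem _),
    hminus 1 1 (by norm_num) (by norm_num) (fun a ha hpar => absurd hpar (by omega)),
    hminus 1 (-1) (by norm_num) (by norm_num) (fun a ha hpar => absurd hpar (by omega))⟩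
  have hU : ∀ p ∈ Set.range (uu d), p ∈ Wlpm d 0 1 := by
    rintro p ⟨a, rfl⟩
    exact vv_mem d hd (by norm_num) (by omega)
  have hfix : ∀ a : ℕ, a < d → (a + (a + d)) % 2 = 0 →
      vv d 1 a (a + d) ∈ Submodule.span ℂ (Set.range (ww d 0 1) ∪ Set.range (uu d)) := by
    intro a ha _
    exact Submodule.subset_span (Set.mem_union_right _ ⟨⟨a, ha⟩, rfl⟩)
  have hspan := span_eq d hd heven' (l := 0) (e := 1) (by norm_num) (by norm_num) _ hU hfix
  rw [← Set.Sum.elim_range] at hspan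
  rw [hspan, finrank_span_eq_card (li_plus d hd heven')]
  simp only [Fintype.card_sum, hcard, Fintype.card_fin]
  have h2 : d / 2 = m := by omega
  rw [h2, hm, show (m + m) * (m + m + 2) = 2 * ((m + m) * m + (m + m)) by ring,
    Nat.mul_div_cancel_left _ (by norm_num)]
end

section
/- Let n = 2d and let g = σ^d τ^d on V = C^{2d}. Then g^2 = (−1)^d Id_V, so g induces an involution on P^{2d-1}, and the eigenspace decomposition of Sym^2 V under the induced involution is ⟨W_0^+, W_1^-⟩ ⊕ ⟨W_0^-, W_1^+⟩, with dimensions (d^2, d(d+1)) if d is odd and (d(d+1), d^2) if d is even. -/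
open Module MvPolynomial

/-- `g = σ^d τ^d` on `V = ℂ^{2d}`: on basis vectors, `g (x_j) = (−1)^j x_{j+d}`. -/
noncomputable def gMap (d : ℕ) : Module.End ℂ (ZMod (2 * d) → ℂ) :=
  { toFun := fun f i => (-1 : ℂ) ^ ((i - (d : ZMod (2 * d))).val) * f (i - (d : ZMod (2 * d)))
    map_add' := by intros; funext i; simp [mul_add]
    map_smul' := by intros; funext i; simp [Pi.smul_apply, smul_eq_mul]; ring }

/-- The induced action `g ⊗ g` of `σ^d τ^d` on `Sym² V`, realized on polynomials by the
substitution `x_j ↦ (−1)^j x_{j+d}`; on the degree-2 part it is an involution. -/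
noncomputable def gSym (d : ℕ) : Module.End ℂ (MvPolynomial (ZMod (2 * d)) ℂ) :=
  (MvPolynomial.aeval
    (fun j : ZMod (2 * d) =>
      ((-1 : ℂ) ^ j.val) • MvPolynomial.X (j + (d : ZMod (2 * d))))).toLinearMap

/-!
The substitution `x_j ↦ (-1)^j x_{j+d}` sends `x_i x_j` to `(-1)^{i+j} x_{i+d} x_{j+d}`, so for
`s = ±1` every `v^s_{ij} = x_i x_j + s (-1)^{i+j} x_{i+d} x_{j+d}` is an `s`-eigenvector, and these
vectors span `W_0^s ⊕ W_1^{-s}`. As `x_i x_j = (v^+_{ij} + v^-_{ij}) / 2`, the two spans together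
exhaust `Sym² V`, which identifies both eigenspaces.

For the dimensions, the vectors `v^s_{a,a+δ}` with `a, δ < d`, together with
`v^s_{a,a+d} = 2 x_a x_{a+d}` when `s (-1)^d = 1`, are independent: `x_a x_{a+δ}` occurs in no
other of them. This gives the lower bounds `d²` and `d² + d`, whose sum is already
`d(2d+1) ≥ dim Sym² V`.
-/

theorem ZMod.neg_one_pow_val_add {R : Type*} [Ring R] {n : ℕ} [NeZero n] (hn : 2 ∣ n)
    (i j : ZMod n) : (-1 : R) ^ (i + j).val = (-1) ^ i.val * (-1) ^ j.val := by
  rw [← pow_add, neg_one_pow_eq_pow_mod_two, ZMod.val_add, Nat.mod_mod_of_dvd _ hn,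
    ← neg_one_pow_eq_pow_mod_two]

theorem ZMod.neg_one_pow_val_natCast {R : Type*} [Ring R] {n : ℕ} (hn : 2 ∣ n) (x : ℕ) :
    (-1 : R) ^ (x : ZMod n).val = (-1) ^ x := by
  rw [ZMod.val_natCast, neg_one_pow_eq_pow_mod_two, Nat.mod_mod_of_dvd _ hn,
    ← neg_one_pow_eq_pow_mod_two]

theorem ZMod.natCast_eq_natCast_iff_of_lt {m x y : ℕ} (hx : x < 2 * m) (hy : y < 2 * m) :
    (x : ZMod m) = y ↔ x = y ∨ x = y + m ∨ y = x + m := by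
  have hmod : ∀ z < 2 * m, z % m = if z < m then z else z - m := fun z hz => by
    split_ifs with h
    · exact Nat.mod_eq_of_lt h
    · rw [Nat.mod_eq_sub_mod (by omega), Nat.mod_eq_of_lt (by omega)]
  rw [ZMod.natCast_eq_natCast_iff', hmod x hx, hmod y hy]
  split_ifs <;> omega

theorem Finsupp.single_one_add_single_one_eq_iff {α : Type*} {a b c e : α} :
    single a 1 + single b 1 = single c 1 + single e (1 : ℕ) ↔
      a = c ∧ b = e ∨ a = e ∧ b = c := by
  rw [single_add_single_eq_single_add_single one_ne_zero one_ne_zero]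
  simp

theorem X_mul_X_eq_monomial {σ R : Type*} [CommSemiring R] (i j : σ) :
    (X i * X j : MvPolynomial σ R) = monomial (Finsupp.single i 1 + Finsupp.single j 1) 1 := by
  rw [X, X, monomial_mul, one_mul]

theorem LinearIndependent.of_pairwise_dual_eq_zero_ne_zero {K V ι : Type*} [Field K]
    [AddCommGroup V] [Module K V] (v : ι → V) (f : ι → Module.Dual K V)
    (h0 : Pairwise fun i j => f i (v j) = 0) (hne : ∀ i, f i (v i) ≠ 0) :
    LinearIndependent K v :=
  .of_pairwise_dual_eq_zero_one v (fun i => (f i (v i))⁻¹ • f i)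
    (fun i j hij => by simp [h0 hij]) (fun i => by simp [hne i])

theorem Module.End.sup_inf_eigenspace_eq {R M : Type*} [CommRing R] [IsDomain R]
    [AddCommGroup M] [Module R M] [IsTorsionFree R M] {f : Module.End R M} {a b : R}
    (hab : a ≠ b) {U U' : Submodule R M} (hU : U ≤ f.eigenspace a)
    (hU' : U' ≤ f.eigenspace b) :
    (U ⊔ U') ⊓ f.eigenspace a = U := by
  refine le_antisymm ?_ (le_inf le_sup_left hU)
  rintro _ ⟨hx, hxa⟩
  obtain ⟨u, hu, u', hu', rfl⟩ := Submodule.mem_sup.1 hx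
  have hu'a : u' ∈ f.eigenspace a := by simpa using sub_mem hxa (hU hu)
  rw [(f.disjoint_genEigenspace hab 1 1).eq_bot.le ⟨hu'a, hU' hu'⟩, add_zero]
  exact hu

theorem natCast_add_self_eq_zero (d : ℕ) : (d : ZMod (2 * d)) + d = 0 := by
  rw [← two_mul]
  exact_mod_cast ZMod.natCast_self (2 * d)

variable {d : ℕ}

theorem gMap_apply (f : ZMod (2 * d) → ℂ) (i : ZMod (2 * d)) :
    gMap d f i = (-1) ^ (i + d).val * f (i + d) := by
  show (-1) ^ (i - d).val * f (i - d) = _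
  rw [sub_eq_add_neg, neg_eq_of_add_eq_zero_right (natCast_add_self_eq_zero d)]

theorem gMap_sq (hd : 0 < d) :
    gMap d ^ 2 = ((-1 : ℂ) ^ d) • (1 : Module.End ℂ (ZMod (2 * d) → ℂ)) := by
  have : NeZero (2 * d) := ⟨by omega⟩
  refine LinearMap.ext fun f => funext fun i => ?_
  simp only [pow_two, Module.End.mul_apply, gMap_apply, add_assoc, natCast_add_self_eq_zero,
    add_zero, LinearMap.smul_apply, Module.End.one_apply, Pi.smul_apply, smul_eq_mul,
    ZMod.neg_one_pow_val_add (dvd_mul_right 2 d), ZMod.neg_one_pow_val_natCast (dvd_mul_right 2 d)]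
  have hsq : ((-1 : ℂ) ^ i.val) ^ 2 = 1 := by rw [pow_right_comm, neg_one_sq, one_pow]
  linear_combination (-1 : ℂ) ^ d * f i * hsq

theorem gSym_X_mul_X (hd : 0 < d) (i j : ZMod (2 * d)) :
    gSym d (X i * X j) = (-1 : ℂ) ^ (i + j).val • (X (i + d) * X (j + d)) := by
  have : NeZero (2 * d) := ⟨by omega⟩
  simp only [gSym, AlgHom.toLinearMap_apply, map_mul, aeval_X, smul_mul_smul_comm,
    ZMod.neg_one_pow_val_add (dvd_mul_right 2 d)]

/-- `x_i x_j + s (-1)^{i+j} x_{i+d} x_{j+d}`: a generator of `W_0^s` or of `W_1^{-s}`,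
according to the parity of `i + j`. -/
noncomputable def signedPair (d : ℕ) (s : ℂ) (i j : ZMod (2 * d)) :
    MvPolynomial (ZMod (2 * d)) ℂ :=
  X i * X j + (s * (-1) ^ (i + j).val) • (X (i + d) * X (j + d))

theorem gSym_signedPair (hd : 0 < d) {s : ℂ} (hs : s * s = 1) (i j : ZMod (2 * d)) :
    gSym d (signedPair d s i j) = s • signedPair d s i j := by
  have hshift : ∀ k : ZMod (2 * d), k + d + d = k := fun k => by
    rw [add_assoc, natCast_add_self_eq_zero, add_zero]
  have hsum : i + d + (j + d) = i + j := by
    rw [add_add_add_comm, natCast_add_self_eq_zero, add_zero]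
  have hsq : ((-1 : ℂ) ^ (i + j).val) ^ 2 = 1 := by rw [pow_right_comm, neg_one_sq, one_pow]
  rw [signedPair, map_add, map_smul, gSym_X_mul_X hd, gSym_X_mul_X hd, hsum, hshift, hshift]
  match_scalars
  · linear_combination -(-1 : ℂ) ^ (i + j).val * hs
  · linear_combination s * hsq

theorem signedPair_mem_sup_Wlpm (s : ℂ) (i j : ZMod (2 * d)) :
    signedPair d s i j ∈ Wlpm d 0 s ⊔ Wlpm d 1 (-s) := by
  rcases Nat.mod_two_eq_zero_or_one (i + j).val with h | h
  · refine Submodule.mem_sup_left (Submodule.subset_span ⟨i, j, h, ?_⟩)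
    rw [signedPair, neg_one_pow_eq_pow_mod_two, h, pow_zero, mul_one]
  · refine Submodule.mem_sup_right (Submodule.subset_span ⟨i, j, h, ?_⟩)
    rw [signedPair, neg_one_pow_eq_pow_mod_two, h, pow_one, mul_neg_one]

theorem Wlpm_le_span_signedPair {l : ℕ} {e : ℂ} (s : ℂ) (he : e = s * (-1) ^ l) :
    Wlpm d l e ≤ Submodule.span ℂ (Set.range (Function.uncurry (signedPair d s))) := by
  rw [Wlpm, Submodule.span_le]
  rintro _ ⟨i, j, hij, rfl⟩
  refine Submodule.subset_span ⟨(i, j), ?_⟩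
  rw [Function.uncurry_apply_pair, signedPair, neg_one_pow_eq_pow_mod_two, hij, he]

theorem sup_Wlpm_eq_span_signedPair (s : ℂ) :
    Wlpm d 0 s ⊔ Wlpm d 1 (-s) =
      Submodule.span ℂ (Set.range (Function.uncurry (signedPair d s))) :=
  le_antisymm (sup_le (Wlpm_le_span_signedPair s (by ring)) (Wlpm_le_span_signedPair s (by ring)))
    (Submodule.span_le.2 (Set.range_subset_iff.2 fun ij => signedPair_mem_sup_Wlpm s ij.1 ij.2))

theorem span_signedPair_le_symSquare (s : ℂ) :
    Submodule.span ℂ (Set.range (Function.uncurry (signedPair d s))) ≤ symSquare (2 * d) := by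
  rw [Submodule.span_le, Set.range_subset_iff]
  rintro ⟨i, j⟩
  exact add_mem (Submodule.subset_span ⟨i, j, rfl⟩)
    (Submodule.smul_mem _ _ (Submodule.subset_span ⟨_, _, rfl⟩))

theorem symSquare_le_span_signedPair_sup (s : ℂ) :
    symSquare (2 * d) ≤ Submodule.span ℂ (Set.range (Function.uncurry (signedPair d s))) ⊔
      Submodule.span ℂ (Set.range (Function.uncurry (signedPair d (-s)))) := by
  rw [symSquare, Submodule.span_le]
  rintro _ ⟨i, j, rfl⟩
  have hsplit :
      X i * X j = (2⁻¹ : ℂ) • (signedPair d s i j + signedPair d (-s) i j) := by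
    simp only [signedPair]
    module
  rw [SetLike.mem_coe, hsplit]
  exact Submodule.smul_mem _ _ (add_mem
    (Submodule.mem_sup_left (Submodule.subset_span ⟨(i, j), rfl⟩))
    (Submodule.mem_sup_right (Submodule.subset_span ⟨(i, j), rfl⟩)))

theorem span_signedPair_le_eigenspace (hd : 0 < d) {s : ℂ} (hs : s * s = 1) :
    Submodule.span ℂ (Set.range (Function.uncurry (signedPair d s))) ≤
      Module.End.eigenspace (gSym d) s := by
  rw [Submodule.span_le, Set.range_subset_iff]
  rintro ⟨i, j⟩
  exact Module.End.mem_eigenspace_iff.2 (gSym_signedPair hd hs i j)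

theorem symSquare_inf_eigenspace (hd : 0 < d) {s : ℂ} (hs : s = 1 ∨ s = -1) :
    symSquare (2 * d) ⊓ Module.End.eigenspace (gSym d) s = Wlpm d 0 s ⊔ Wlpm d 1 (-s) := by
  have hs2 : s * s = 1 := by rcases hs with rfl | rfl <;> norm_num
  have hne : s ≠ -s := by rcases hs with rfl | rfl <;> norm_num
  rw [sup_Wlpm_eq_span_signedPair, le_antisymm (symSquare_le_span_signedPair_sup s)
    (sup_le (span_signedPair_le_symSquare s) (span_signedPair_le_symSquare (-s)))]
  exact Module.End.sup_inf_eigenspace_eq hne (span_signedPair_le_eigenspace hd hs2)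
    (span_signedPair_le_eigenspace hd (by rwa [neg_mul_neg]))

theorem symSquare_eq_span_sym2 (n : ℕ) :
    symSquare n = Submodule.span ℂ (Set.range (Sym2.lift
      ⟨fun i j => (X i * X j : MvPolynomial (ZMod n) ℂ), fun _ _ => mul_comm _ _⟩)) := by
  rw [symSquare]
  congr 1
  ext p
  constructor
  · rintro ⟨i, j, rfl⟩
    exact ⟨s(i, j), rfl⟩
  · rintro ⟨z, rfl⟩
    induction z using Sym2.ind with
    | h i j => exact ⟨i, j, rfl⟩

theorem finiteDimensional_symSquare (n : ℕ) [NeZero n] : FiniteDimensional ℂ (symSquare n) := by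
  rw [symSquare_eq_span_sym2]
  exact FiniteDimensional.span_of_finite ℂ (Set.finite_range _)

theorem finrank_symSquare_le (n : ℕ) [NeZero n] :
    finrank ℂ (symSquare n) ≤ (n + 1).choose 2 := by
  rw [symSquare_eq_span_sym2]
  exact (finrank_range_le_card _).trans_eq (by rw [Sym2.card, ZMod.card])

theorem finrank_sup_Wlpm_add_le (hd : 0 < d) :
    finrank ℂ (Wlpm d 0 1 ⊔ Wlpm d 1 (-1) : Submodule ℂ _) +
      finrank ℂ (Wlpm d 0 (-1) ⊔ Wlpm d 1 1 : Submodule ℂ _) ≤ d * (2 * d + 1) := by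
  have : NeZero (2 * d) := ⟨by omega⟩
  have := finiteDimensional_symSquare (2 * d)
  set E : ℂ → Submodule ℂ (MvPolynomial (ZMod (2 * d)) ℂ) := fun s =>
    symSquare (2 * d) ⊓ Module.End.eigenspace (gSym d) s
  have hdisj : E 1 ⊓ E (-1) = ⊥ :=
    ((gSym d).disjoint_genEigenspace (by norm_num) 1 1).mono inf_le_right inf_le_right |>.eq_bot
  have hsum := Submodule.finrank_sup_add_finrank_inf_eq (E 1) (E (-1))
  rw [hdisj, finrank_bot, add_zero] at hsum
  have hchoose : (2 * d + 1).choose 2 = d * (2 * d + 1) := by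
    rw [Nat.choose_two_right, Nat.add_sub_cancel, mul_comm, mul_assoc,
      Nat.mul_div_cancel_left _ two_pos]
  have hneg := symSquare_inf_eigenspace hd (s := -1) (Or.inr rfl)
  rw [neg_neg] at hneg
  rw [← symSquare_inf_eigenspace hd (Or.inl rfl), ← hneg, ← hsum, ← hchoose]
  exact (Submodule.finrank_mono (sup_le inf_le_left inf_le_left)).trans (finrank_symSquare_le _)

theorem pair_natCast_eq_iff {a δ a' δ' : ℕ} (ha : a < d) (ha' : a' < d)
    (hδ : δ ≤ d) (hδ' : δ' ≤ d) :
    Finsupp.single (a' : ZMod (2 * d)) 1 + Finsupp.single ((a' + δ' : ℕ) : ZMod (2 * d)) 1 =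
        Finsupp.single (a : ZMod (2 * d)) 1 + Finsupp.single ((a + δ : ℕ) : ZMod (2 * d)) 1 ↔
      a' = a ∧ δ' = δ := by
  rw [Finsupp.single_one_add_single_one_eq_iff,
    ZMod.natCast_eq_natCast_iff_of_lt (by omega) (by omega),
    ZMod.natCast_eq_natCast_iff_of_lt (by omega) (by omega),
    ZMod.natCast_eq_natCast_iff_of_lt (by omega) (by omega),
    ZMod.natCast_eq_natCast_iff_of_lt (by omega) (by omega)]
  omega

theorem shifted_pair_natCast_eq_iff {a δ a' δ' : ℕ} (ha : a < d) (ha' : a' < d)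
    (hδ : δ ≤ d) (hδ' : δ' ≤ d) :
    Finsupp.single ((a' + d : ℕ) : ZMod (2 * d)) 1 +
          Finsupp.single ((a' + δ' + d : ℕ) : ZMod (2 * d)) 1 =
        Finsupp.single (a : ZMod (2 * d)) 1 + Finsupp.single ((a + δ : ℕ) : ZMod (2 * d)) 1 ↔
      a' = a ∧ δ' = d ∧ δ = d := by
  rw [Finsupp.single_one_add_single_one_eq_iff,
    ZMod.natCast_eq_natCast_iff_of_lt (by omega) (by omega),
    ZMod.natCast_eq_natCast_iff_of_lt (by omega) (by omega),
    ZMod.natCast_eq_natCast_iff_of_lt (by omega) (by omega),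
    ZMod.natCast_eq_natCast_iff_of_lt (by omega) (by omega)]
  omega

theorem coeff_signedPair {a δ a' δ' : ℕ} (ha : a < d) (ha' : a' < d)
    (hδ : δ ≤ d) (hδ' : δ' ≤ d) (s : ℂ) :
    coeff (Finsupp.single (a : ZMod (2 * d)) 1 + Finsupp.single ((a + δ : ℕ) : ZMod (2 * d)) 1)
        (signedPair d s a' (a' + δ' : ℕ)) =
      if a' = a ∧ δ' = δ then (if δ = d then 1 + s * (-1) ^ d else 1) else 0 := by
  have hcast : ∀ x : ℕ, (x : ZMod (2 * d)) + d = ((x + d : ℕ) : ZMod (2 * d)) := fun x => by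
    push_cast; rfl
  have hsign :
      (-1 : ℂ) ^ ((a' : ZMod (2 * d)) + ((a' + δ' : ℕ) : ZMod (2 * d))).val = (-1) ^ δ' := by
    rw [← Nat.cast_add, ZMod.neg_one_pow_val_natCast (dvd_mul_right 2 d), ← add_assoc, pow_add,
      ← two_mul, pow_mul, neg_one_sq, one_pow, one_mul]
  rw [signedPair, hsign, hcast, hcast, coeff_add, coeff_smul, X_mul_X_eq_monomial,
    X_mul_X_eq_monomial, coeff_monomial, coeff_monomial]
  simp only [pair_natCast_eq_iff ha ha' hδ hδ', shifted_pair_natCast_eq_iff ha ha' hδ hδ']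
  by_cases h : a' = a ∧ δ' = δ
  · obtain ⟨rfl, rfl⟩ := h
    by_cases hd' : δ' = d <;> simp [hd']
  · simp only [h, if_false, zero_add]
    rw [if_neg (fun h' => h ⟨h'.1, h'.2.1.trans h'.2.2.symm⟩), smul_zero]

theorem linearIndependent_signedPair {s : ℂ} {N : ℕ}
    (hN : N ≤ d ∨ N = d + 1 ∧ s * (-1) ^ d = 1) :
    LinearIndependent ℂ (fun k : Fin d × Fin N => signedPair d s k.1 (k.1 + k.2 : ℕ)) := by
  have hN' : N ≤ d + 1 := by omega
  refine .of_pairwise_dual_eq_zero_ne_zero _ (fun k => lcoeff ℂ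
      (Finsupp.single ((k.1 : ℕ) : ZMod (2 * d)) 1 +
        Finsupp.single ((k.1 + k.2 : ℕ) : ZMod (2 * d)) 1))
    ?_ fun k => ?_
  · rintro ⟨a, δ⟩ ⟨a', δ'⟩ hne
    rw [lcoeff_apply, coeff_signedPair a.2 a'.2 (by omega) (by omega), if_neg]
    rintro ⟨h1, h2⟩
    exact hne (Prod.ext (Fin.ext h1.symm) (Fin.ext h2.symm))
  · rw [lcoeff_apply, coeff_signedPair k.1.2 k.1.2 (by omega) (by omega), if_pos ⟨rfl, rfl⟩]
    split_ifs with h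
    · rw [(hN.resolve_left (by omega)).2]
      norm_num
    · exact one_ne_zero

theorem le_finrank_sup_Wlpm (hd : 0 < d) {s : ℂ} {N : ℕ}
    (hN : N ≤ d ∨ N = d + 1 ∧ s * (-1) ^ d = 1) :
    d * N ≤ finrank ℂ (Wlpm d 0 s ⊔ Wlpm d 1 (-s) : Submodule ℂ _) := by
  have : NeZero (2 * d) := ⟨by omega⟩
  have := finiteDimensional_symSquare (2 * d)
  have := Submodule.finiteDimensional_of_le
    ((sup_Wlpm_eq_span_signedPair (d := d) s).trans_le (span_signedPair_le_symSquare s))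
  have hcard := finrank_span_eq_card (linearIndependent_signedPair hN)
  rw [Fintype.card_prod, Fintype.card_fin, Fintype.card_fin] at hcard
  rw [← hcard]
  exact Submodule.finrank_mono (Submodule.span_le.2 (Set.range_subset_iff.2 fun k =>
    signedPair_mem_sup_Wlpm s _ _))

/-- `g = σ^d τ^d` satisfies `g² = (−1)^d Id_V`, hence induces an involution on
`ℙ^{2d-1}`; the eigenspace decomposition of `Sym² V` under the induced involution is
`⟨W_0^+, W_1^-⟩ ⊕ ⟨W_0^-, W_1^+⟩`, with dimensions `(d², d(d+1))` if `d` is odd and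
`(d(d+1), d²)` if `d` is even. -/
theorem gMap_involution_and_eigenspaces (d : ℕ) (hd : 0 < d) :
    (gMap d) ^ 2 = ((-1 : ℂ) ^ d) • (1 : Module.End ℂ (ZMod (2 * d) → ℂ)) ∧
    symSquare (2 * d) ⊓ Module.End.eigenspace (gSym d) 1 = Wlpm d 0 1 ⊔ Wlpm d 1 (-1) ∧
    symSquare (2 * d) ⊓ Module.End.eigenspace (gSym d) (-1) = Wlpm d 0 (-1) ⊔ Wlpm d 1 1 ∧
    Module.finrank ℂ (Wlpm d 0 1 ⊔ Wlpm d 1 (-1) : Submodule ℂ _) =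
      (if Odd d then d ^ 2 else d * (d + 1)) ∧
    Module.finrank ℂ (Wlpm d 0 (-1) ⊔ Wlpm d 1 1 : Submodule ℂ _) =
      (if Odd d then d * (d + 1) else d ^ 2) := by
  have hneg := symSquare_inf_eigenspace hd (s := -1) (Or.inr rfl)
  rw [neg_neg] at hneg
  have hsum := finrank_sup_Wlpm_add_le hd
  refine ⟨gMap_sq hd, symSquare_inf_eigenspace hd (Or.inl rfl), hneg, ?_⟩
  rcases Nat.even_or_odd d with hev | hodd
  · have h1 := le_finrank_sup_Wlpm hd (s := 1) (N := d + 1)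
      (Or.inr ⟨rfl, by rw [hev.neg_one_pow, one_mul]⟩)
    have h2 := le_finrank_sup_Wlpm hd (s := -1) (N := d) (Or.inl le_rfl)
    rw [neg_neg] at h2
    simp only [Nat.not_odd_iff_even.2 hev, if_false]
    constructor <;> nlinarith
  · have h1 := le_finrank_sup_Wlpm hd (s := 1) (N := d) (Or.inl le_rfl)
    have h2 := le_finrank_sup_Wlpm hd (s := -1) (N := d + 1)
      (Or.inr ⟨rfl, by rw [hodd.neg_one_pow, mul_neg_one, neg_neg]⟩)
    rw [neg_neg] at h2
    simp only [hodd, if_true]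
    constructor <;> nlinarith
end
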